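/- arXiv:1303.6070 — 8 statements merged into one kernel-verified Lean document; each statement's English description precedes it below -/
import Mathlib

section
/- Let K ∈ I_X. Then Σ_{D ∈ I_X, D ≤ K} C_K(D) = N(K) · ∏_{p ∈ X, K(p) ≠ 0} (1 − 2/N(A_p)), where A_p ∈ I_X is the function with A_p(p) = 1 and A_p(q) = 0 for q ≠ p. -/
open Finset Filter Topology Asymptotics
open scoped Classical

/-- The Möbius function on `I_X = X →₀ ℕ`: `μ A = (-1)^(∑ₓ A x)` if `A x ≤ 1`
for every `x`, and `0` otherwise. -/
noncomputable def mob {X : Type*} (A : X →₀ ℕ) : ℤ :=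
  if ∀ x, A x ≤ 1 then (-1) ^ (A.sum fun _ n => n) else 0

/-- The generalized Ramanujan sum `C_K(M) = ∑_{D ≤ M, D ≤ K} N(D)·μ(K − D)`. -/
noncomputable def ram {X : Type*} [DecidableEq X] (Nrm : (X →₀ ℕ) → ℤ)
    (K M : X →₀ ℕ) : ℤ :=
  ∑ D ∈ Finset.Iic (M ⊓ K), Nrm D * mob (K - D)

section Aux
variable {X : Type*} [DecidableEq X]

noncomputable def ind (S : Finset X) : X →₀ ℕ := ∑ p ∈ S, Finsupp.single p 1

lemma ind_apply (S : Finset X) (x : X) : ind S x = if x ∈ S then 1 else 0 := by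
  classical
  simp [ind, Finsupp.finset_sum_apply, Finsupp.single_apply]

lemma ind_support (S : Finset X) : (ind S).support = S := by
  ext x
  rw [Finsupp.mem_support_iff, ind_apply]
  split <;> simp_all

lemma ind_le {K : X →₀ ℕ} {S : Finset X} (hS : S ⊆ K.support) : ind S ≤ K := by
  intro x
  rw [ind_apply]
  split
  · exact Nat.one_le_iff_ne_zero.2 (Finsupp.mem_support_iff.1 (hS ‹_›))
  · exact Nat.zero_le _

lemma ind_sum (S : Finset X) : (ind S).sum (fun _ n => n) = S.card := by
  rw [Finsupp.sum, ind_support]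
  simp [ind_apply]

lemma mob_ind (S : Finset X) : mob (ind S) = (-1) ^ S.card := by
  rw [mob, if_pos, ind_sum]
  intro x; rw [ind_apply]; split <;> omega

lemma ind_of_sq {F : X →₀ ℕ} (h : ∀ x, F x ≤ 1) : ind F.support = F := by
  ext x
  rw [ind_apply]
  rcases Nat.eq_zero_or_pos (F x) with h0 | h1
  · simp [Finsupp.mem_support_iff, h0]
  · have : F x = 1 := le_antisymm (h x) h1
    simp [Finsupp.mem_support_iff, this]

lemma Nrm_ind (Nrm : (X →₀ ℕ) → ℤ) (h0 : Nrm 0 = 1)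
    (hmul : ∀ A B, Nrm (A + B) = Nrm A * Nrm B) (S : Finset X) :
    Nrm (ind S) = ∏ p ∈ S, Nrm (Finsupp.single p 1) := by
  classical
  induction S using Finset.cons_induction with
  | empty => simpa [ind] using h0
  | cons a s ha ih =>
    rw [Finset.prod_cons, ← ih, ← hmul]
    congr 1
    rw [ind, Finset.sum_cons]; rfl

lemma sum_ind {S U : Finset X} (h : S ⊆ U) : ∑ i ∈ U, ind S i = S.card := by
  rw [← Finset.sum_subset h (fun x _ hx => by rw [ind_apply, if_neg hx])]
  rw [Finset.sum_congr rfl (fun x hx => by rw [ind_apply, if_pos hx]),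
    Finset.sum_const, smul_eq_mul, mul_one]

lemma card_Icc_sub_ind {K : X →₀ ℕ} {S : Finset X} (hS : S ⊆ K.support) :
    (Finset.Icc (K - ind S) K).card = 2 ^ S.card := by
  have hle : ind S ≤ K := ind_le hS
  rw [Finsupp.card_Icc]
  refine Eq.trans (Finset.prod_congr (g := fun x => 2 ^ ind S x) rfl fun x _ => ?_) ?_
  · show _ = 2 ^ ind S x
    rw [Finsupp.tsub_apply, Nat.card_Icc]
    have h2 : ind S x ≤ 1 := by rw [ind_apply]; split <;> omega
    have h3 : ind S x ≤ K x := hle x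
    rcases Nat.le_one_iff_eq_zero_or_eq_one.1 h2 with h | h <;> rw [h] <;> simp <;> omega
  · rw [Finset.prod_pow_eq_pow_sum]
    congr 1
    exact sum_ind (fun x hx => by simp only [Finset.mem_union]; exact Or.inr (hS hx))

end Aux

/-- For `K ∈ I_X`, `∑_{D ≤ K} C_K(D) = N(K) · ∏_{p : K(p) ≠ 0} (1 − 2/N(A_p))`,
where `A_p = single p 1`. -/
theorem sum_ram_eq_norm_mul_prod {X : Type*} [Nonempty X] [DecidableEq X]
    (Nrm : (X →₀ ℕ) → ℤ)
    (hge : ∀ A, 1 ≤ Nrm A) (h0 : Nrm 0 = 1) (hgt : ∀ A, A ≠ 0 → 1 < Nrm A)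
    (hmul : ∀ A B, Nrm (A + B) = Nrm A * Nrm B) (K : X →₀ ℕ) :
    ((∑ D ∈ Finset.Iic K, ram Nrm K D : ℤ) : ℝ)
      = (Nrm K : ℝ) * ∏ p ∈ K.support, (1 - 2 / (Nrm (Finsupp.single p 1) : ℝ)) := by
  classical
  have step1 : ∑ D ∈ Finset.Iic K, ram Nrm K D
      = ∑ E ∈ Finset.Iic K, ((Finset.Icc E K).card : ℤ) * (Nrm E * mob (K - E)) := by
    have h1 : ∀ D ∈ Finset.Iic K, ram Nrm K D
        = ∑ E ∈ Finset.Iic D, Nrm E * mob (K - E) := by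
      intro D hD
      rw [ram, inf_eq_left.2 (Finset.mem_Iic.1 hD)]
    rw [Finset.sum_congr rfl h1,
      Finset.sum_comm' (t' := Finset.Iic K) (s' := fun E => Finset.Icc E K)
        (fun D E => by
          simp only [Finset.mem_Iic, Finset.mem_Icc]
          exact ⟨fun ⟨a, b⟩ => ⟨⟨b, a⟩, b.trans a⟩, fun ⟨⟨b, a⟩, _⟩ => ⟨a, b⟩⟩)]
    exact Finset.sum_congr rfl fun E _ => by rw [Finset.sum_const, nsmul_eq_mul]
  have step2 : ∑ E ∈ Finset.Iic K, ((Finset.Icc E K).card : ℤ) * (Nrm E * mob (K - E))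
      = ∑ S ∈ K.support.powerset,
          (2 : ℤ) ^ S.card * (Nrm (K - ind S) * (-1) ^ S.card) := by
    rw [← Finset.sum_filter_of_ne (p := fun E => ∀ x, (K - E) x ≤ 1)
      (fun E _ hne => by
        by_contra hx
        exact hne (by rw [mob, if_neg hx, mul_zero, mul_zero]))]
    refine Finset.sum_nbij' (i := fun E => (K - E).support) (j := fun S => K - ind S)
      ?_ ?_ ?_ ?_ ?_
    · intro E hE
      simp only [Finset.mem_filter, Finset.mem_Iic] at hE
      rw [Finset.mem_powerset]
      intro x hx
      rw [Finsupp.mem_support_iff] at hx ⊢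
      intro h
      exact hx (by rw [Finsupp.tsub_apply, h]; simp)
    · intro S hS
      rw [Finset.mem_powerset] at hS
      have hle : ind S ≤ K := ind_le hS
      simp only [Finset.mem_filter, Finset.mem_Iic]
      refine ⟨tsub_le_self, fun x => ?_⟩
      rw [tsub_tsub_cancel_of_le hle, ind_apply]
      split <;> omega
    · intro E hE
      simp only [Finset.mem_filter, Finset.mem_Iic] at hE
      rw [ind_of_sq hE.2, tsub_tsub_cancel_of_le hE.1]
    · intro S hS
      rw [Finset.mem_powerset] at hS
      rw [tsub_tsub_cancel_of_le (ind_le hS), ind_support]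
    · intro E hE
      simp only [Finset.mem_filter, Finset.mem_Iic] at hE
      set S := (K - E).support with hSdef
      have hS : S ⊆ K.support := by
        intro x hx
        rw [Finsupp.mem_support_iff] at hx ⊢
        intro h
        exact hx (by rw [Finsupp.tsub_apply, h]; simp)
      have hKE : ind S = K - E := ind_of_sq hE.2
      have hEeq : K - ind S = E := by rw [hKE, tsub_tsub_cancel_of_le hE.1]
      rw [← hEeq, tsub_tsub_cancel_of_le (ind_le hS), card_Icc_sub_ind hS, mob_ind]
      push_cast
      ring
  rw [step1, step2]
  -- now the real-number computation
  have hNp : ∀ p ∈ K.support, (0 : ℝ) < (Nrm (Finsupp.single p 1) : ℝ) := by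
    intro p _
    exact_mod_cast lt_of_lt_of_le zero_lt_one (hge _)
  have hprod : ∀ S ∈ K.support.powerset,
      (0 : ℝ) < ∏ p ∈ S, (Nrm (Finsupp.single p 1) : ℝ) := by
    intro S hS
    exact Finset.prod_pos fun p hp => hNp p (Finset.mem_powerset.1 hS hp)
  have hrw : ∀ p ∈ K.support, (1 : ℝ) - 2 / (Nrm (Finsupp.single p 1) : ℝ)
      = -(2 / (Nrm (Finsupp.single p 1) : ℝ)) + 1 := fun p _ => by ring
  rw [Finset.prod_congr rfl hrw, Finset.prod_add, Finset.mul_sum]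
  push_cast
  refine Finset.sum_congr rfl fun S hS => ?_
  have hSsub : S ⊆ K.support := Finset.mem_powerset.1 hS
  have hNK : (Nrm K : ℝ)
      = (Nrm (K - ind S) : ℝ) * ∏ p ∈ S, (Nrm (Finsupp.single p 1) : ℝ) := by
    have h3 := hmul (K - ind S) (ind S)
    rw [tsub_add_cancel_of_le (ind_le hSsub)] at h3
    rw [h3, Nrm_ind Nrm h0 hmul]
    push_cast
    ring
  rw [Finset.prod_const, hNK]
  have h2 : ∏ p ∈ S, -(2 / (Nrm (Finsupp.single p 1) : ℝ))
      = (-2 : ℝ) ^ S.card / ∏ p ∈ S, (Nrm (Finsupp.single p 1) : ℝ) := by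
    rw [← Finset.prod_const, ← Finset.prod_div_distrib]
    exact Finset.prod_congr rfl fun p _ => by ring
  rw [h2]
  have hne : (∏ p ∈ S, (Nrm (Finsupp.single p 1) : ℝ)) ≠ 0 := ne_of_gt (hprod S hS)
  field_simp
  rw [show ((-2 : ℝ)) = (-1) * 2 by norm_num, mul_pow]
  ring
end

section
/- Let M, N ∈ I_X. Then Σ_{D ∈ I_X, D ≤ N} C_D(M) equals N(N) if N ≤ M, and equals 0 otherwise. -/
/-!
Exchanging the order of summation gives
`∑_{D ≤ L} C_D(M) = ∑_{E ≤ M ⊓ L} N(E) · ∑_{E ≤ D ≤ L} μ(D − E)`.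
The inner sum is `∑_{F ≤ L − E} μ(F)`, and since `μ` is a product of one-variable factors
`μ₀(n) = 1, −1, 0` for `n = 0, 1, ≥ 2`, it splits as `∏_{x ∈ supp (L − E)} ∑_{k ≤ (L − E)(x)} μ₀(k)`,
which is `1` if `E = L` and `0` otherwise. Only the term `E = L` survives, and it occurs iff `L ≤ M`.
-/

open Finset Filter Topology Asymptotics
open scoped Classical

theorem Finset.prod_sum_finsupp {ι α β : Type*} [Zero α] [CommSemiring β] (s : Finset ι)
    (t : ι → Finset α) (g : ι → α → β) :
    ∏ i ∈ s, ∑ a ∈ t i, g i a = ∑ f ∈ s.finsupp t, ∏ i ∈ s, g i (f i) := by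
  rw [Finset.finsupp, sum_map, prod_sum]
  refine sum_congr rfl fun p _ => ?_
  rw [← prod_attach s]
  exact prod_congr rfl fun i _ => congrArg (g i) (Finsupp.indicator_of_mem i.2 p).symm

theorem Finset.sum_Icc_tsub {α β : Type*} [AddCommMonoid α] [PartialOrder α]
    [CanonicallyOrderedAdd α] [Sub α] [OrderedSub α] [AddLeftReflectLE α] [OrderBot α]
    [LocallyFiniteOrder α] [AddCommMonoid β] {D L : α} (h : D ≤ L) (f : α → β) :
    ∑ K ∈ Icc D L, f (K - D) = ∑ E ∈ Iic (L - D), f E := by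
  refine sum_nbij' (· - D) (D + ·) ?_ ?_ ?_ ?_ fun _ _ => rfl
  · intro K hK
    simp only [mem_Icc, mem_Iic] at hK ⊢
    exact tsub_le_tsub_right hK.2 D
  · intro E hE
    simp only [mem_Icc, mem_Iic] at hE ⊢
    exact ⟨le_self_add, (le_tsub_iff_left h).mp hE⟩
  · intro K hK
    exact add_tsub_cancel_of_le (mem_Icc.mp hK).1
  · intro E _
    exact add_tsub_cancel_left D E

theorem Finsupp.Iic_eq_finsupp {ι α : Type*} [DecidableEq ι] [AddCommMonoid α] [PartialOrder α]
    [CanonicallyOrderedAdd α] [OrderBot α] [LocallyFiniteOrder α] [DecidableEq α] (A : ι →₀ α) :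
    Iic A = A.support.finsupp fun i => Iic (A i) := by
  ext E
  simp only [mem_Iic, mem_finsupp_iff, Finsupp.le_def]
  refine ⟨fun h => ⟨Finsupp.support_mono h, fun i _ => h i⟩, fun ⟨hsupp, h⟩ i => ?_⟩
  by_cases hi : i ∈ A.support
  · exact h i hi
  · simp [Finsupp.notMem_support_iff.mp (mt (@hsupp i) hi)]

def mobFactor (n : ℕ) : ℤ := if n ≤ 1 then (-1) ^ n else 0

theorem sum_Iic_mobFactor (n : ℕ) : ∑ k ∈ Iic n, mobFactor k = if n = 0 then 1 else 0 := by
  rw [← Nat.range_succ_eq_Iic]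
  rcases n with _ | m
  · simp [mobFactor]
  · rw [sum_range_succ', sum_range_succ']
    simp [mobFactor]

theorem mob_eq_prod_mobFactor {X : Type*} {A : X →₀ ℕ} {s : Finset X} (hs : A.support ⊆ s) :
    mob A = ∏ x ∈ s, mobFactor (A x) := by
  unfold mob
  split_ifs with h
  · rw [Finsupp.sum, sum_subset hs fun x _ hx => Finsupp.notMem_support_iff.mp hx,
      ← prod_pow_eq_pow_sum]
    exact prod_congr rfl fun x _ => (if_pos (h x)).symm
  · obtain ⟨x, hx⟩ := not_forall.mp h
    refine (prod_eq_zero (hs (Finsupp.mem_support_iff.mpr (by omega : A x ≠ 0))) ?_).symm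
    exact if_neg hx

theorem sum_Iic_mob {X : Type*} [DecidableEq X] (A : X →₀ ℕ) :
    ∑ E ∈ Iic A, mob E = if A = 0 then 1 else 0 := by
  rcases eq_or_ne A 0 with rfl | hA
  · rw [← bot_eq_zero, Iic_bot, sum_singleton, bot_eq_zero]
    simp [mob]
  obtain ⟨x, hx⟩ := Finsupp.support_nonempty_iff.mpr hA
  calc ∑ E ∈ Iic A, mob E
      = ∑ E ∈ A.support.finsupp (fun x => Iic (A x)), ∏ x ∈ A.support, mobFactor (E x) := by
        rw [Finsupp.Iic_eq_finsupp]
        exact sum_congr rfl fun E hE => mob_eq_prod_mobFactor (mem_finsupp_iff.mp hE).1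
    _ = ∏ x ∈ A.support, ∑ k ∈ Iic (A x), mobFactor k := (prod_sum_finsupp _ _ _).symm
    _ = if A = 0 then 1 else 0 := by
        rw [if_neg hA]
        exact prod_eq_zero hx (by rw [sum_Iic_mobFactor, if_neg (Finsupp.mem_support_iff.mp hx)])

theorem sum_Icc_mob_tsub {X : Type*} [DecidableEq X] {D L : X →₀ ℕ} (h : D ≤ L) :
    ∑ K ∈ Icc D L, mob (K - D) = if D = L then 1 else 0 := by
  rw [sum_Icc_tsub h, sum_Iic_mob]
  simp only [tsub_eq_zero_iff_le]
  exact if_congr ⟨fun hLD => le_antisymm h hLD, fun hDL => hDL.ge⟩ rfl rfl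

theorem sum_ram_varying_modulus_general {X : Type*} [DecidableEq X]
    (Nrm : (X →₀ ℕ) → ℤ) (M L : X →₀ ℕ) :
    ∑ D ∈ Finset.Iic L, ram Nrm D M = if L ≤ M then Nrm L else 0 := by
  have hswap : ∀ K D, K ∈ Iic L ∧ D ∈ Iic (M ⊓ K) ↔ K ∈ Icc D L ∧ D ∈ Iic (M ⊓ L) := by
    simp only [mem_Iic, mem_Icc, le_inf_iff]
    exact fun K D => ⟨fun ⟨hKL, hDM, hDK⟩ => ⟨⟨hDK, hKL⟩, hDM, hDK.trans hKL⟩,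
      fun ⟨⟨hDK, hKL⟩, hDM, _⟩ => ⟨hKL, hDM, hDK⟩⟩
  calc ∑ K ∈ Iic L, ram Nrm K M
      = ∑ D ∈ Iic (M ⊓ L), ∑ K ∈ Icc D L, Nrm D * mob (K - D) := sum_comm' hswap
    _ = ∑ D ∈ Iic (M ⊓ L), if D = L then Nrm D else 0 := by
        refine sum_congr rfl fun D hD => ?_
        rw [← mul_sum, sum_Icc_mob_tsub ((mem_Iic.mp hD).trans inf_le_right)]
        simp
    _ = if L ≤ M then Nrm L else 0 := by simp [sum_ite_eq', le_inf_iff]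

/-- For `M, L ∈ I_X`, `∑_{D ≤ L} C_D(M)` equals `N(L)` if `L ≤ M` and `0` otherwise. -/
theorem sum_ram_varying_modulus {X : Type*} [Nonempty X] [DecidableEq X]
    (Nrm : (X →₀ ℕ) → ℤ)
    (hge : ∀ A, 1 ≤ Nrm A) (h0 : Nrm 0 = 1) (hgt : ∀ A, A ≠ 0 → 1 < Nrm A)
    (hmul : ∀ A B, Nrm (A + B) = Nrm A * Nrm B) (M L : X →₀ ℕ) :
    ∑ D ∈ Finset.Iic L, ram Nrm D M = if L ≤ M then Nrm L else 0 :=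
  sum_ram_varying_modulus_general Nrm M L
end

section
/- Suppose X is at most countable and [x] = c·x + O(x^α) for some constant c > 0 and some α ∈ [0, 1). Then for every K ∈ I_X with K ≠ 0, the series Σ_{M ∈ I_X} C_K(M)/N(M) converges and equals −c·Λ(K), where Λ(K) = Σ_{D ∈ I_X, D ≤ K} μ(K − D)·log N(D). -/
open Finset Filter Topology Asymptotics
open scoped Classical

/-!
Expanding `C_K(M)` and substituting `M = D + M'` turns the partial sum over `N(M) ≤ x` into
`∑_{D ≤ K} μ(K - D) S(x / N(D))`, where `S(y) = ∑_{N(M) ≤ y} 1 / N(M)`. Abel summation against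
`[y] = c y + O(y^α)` gives `S(y) = c log y + L + o(1)`. As `μ` is a product of local factors
with `μ(1) + μ(p) = 0`, `∑_{D ≤ K} μ(K - D) = 0` for `K ≠ 0`, so the contributions
`c log x + L` cancel and `-c ∑_{D ≤ K} μ(K - D) log N(D)` remains.
-/

theorem Finset.sum_finsupp_prod_eq_prod_sum {ι α R : Type*} [Zero α] [CommSemiring R]
    (s : Finset ι) (t : ι → Finset α) (g : ι → α → R) :
    ∑ f ∈ s.finsupp t, ∏ i ∈ s, g i (f i) = ∏ i ∈ s, ∑ a ∈ t i, g i a := by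
  rw [prod_sum, Finset.finsupp, sum_map]
  -- `Finset.finsupp` builds `s.pi t` with a classical `DecidableEq ι`, hence `congr`
  refine sum_congr (by congr) fun p _ => ?_
  rw [← prod_attach]
  refine prod_congr rfl fun i _ => ?_
  simp [Finsupp.indicator_of_mem i.2]

theorem Finsupp.sum_Iic_prod_eq_prod_sum_Iic {X R : Type*} [DecidableEq X] [CommSemiring R]
    (K : X →₀ ℕ) (g : X → ℕ → R) :
    ∑ D ∈ Iic K, ∏ x ∈ K.support, g x (D x) = ∏ x ∈ K.support, ∑ j ∈ Iic (K x), g x j := by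
  rw [Iic_eq_Icc, Finsupp.Icc_eq, bot_eq_zero, Finsupp.support_zero, empty_union,
    sum_finsupp_prod_eq_prod_sum]
  rfl

def mobNat (n : ℕ) : ℤ := if n ≤ 1 then (-1) ^ n else 0

theorem mob_eq_prod_mobNat {X : Type*} {A : X →₀ ℕ} {s : Finset X} (hs : A.support ⊆ s) :
    mob A = ∏ x ∈ s, mobNat (A x) := by
  unfold mob mobNat
  split_ifs with h
  · rw [prod_congr rfl fun x _ => if_pos (h x), prod_pow_eq_pow_sum,
      ← Finsupp.sum_of_support_subset A hs (fun _ n => n) (fun _ _ => rfl)]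
  · obtain ⟨x, hx⟩ := not_forall.1 h
    have hxs : x ∈ s := hs (Finsupp.mem_support_iff.2 (by omega))
    exact (Finset.prod_eq_zero hxs (if_neg hx)).symm

theorem sum_Iic_mobNat_sub {n : ℕ} (hn : n ≠ 0) : ∑ j ∈ Iic n, mobNat (n - j) = 0 := by
  rw [sum_eq_add_of_mem (n - 1) n (by simp) (by simp) (by omega)]
  · simp [mobNat, Nat.sub_sub_self (Nat.one_le_iff_ne_zero.2 hn)]
  · intro j hj hne
    simp only [mobNat, mem_Iic] at hj ⊢
    rw [if_neg (by omega)]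

theorem sum_Iic_mob_sub {X : Type*} [DecidableEq X] {K : X →₀ ℕ} (hK : K ≠ 0) :
    ∑ D ∈ Iic K, mob (K - D) = 0 := by
  have hsupp : ∀ D : X →₀ ℕ, (K - D).support ⊆ K.support := fun D x hx => by
    simp only [Finsupp.mem_support_iff, Finsupp.tsub_apply] at hx ⊢; omega
  obtain ⟨x₀, hx₀⟩ := Finsupp.support_nonempty_iff.2 hK
  simp only [mob_eq_prod_mobNat (hsupp _), Finsupp.tsub_apply]
  exact (Finsupp.sum_Iic_prod_eq_prod_sum_Iic K fun x j => mobNat (K x - j)).trans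
    (Finset.prod_eq_zero hx₀ (sum_Iic_mobNat_sub (Finsupp.mem_support_iff.1 hx₀)))

theorem isBigO_sum_Icc_sub_mul_floor {a : ℕ → ℝ} {c α : ℝ} (hα0 : 0 ≤ α)
    (hA : (fun t : ℝ => ∑ k ∈ Icc 1 ⌊t⌋₊, a k - c * t) =O[atTop] fun t => t ^ α) :
    (fun t : ℝ => ∑ k ∈ Icc 1 ⌊t⌋₊, a k - c * ⌊t⌋₊) =O[atTop] fun t => t ^ α := by
  have hfrac : (fun t : ℝ => c * (t - ⌊t⌋₊)) =O[atTop] fun t => t ^ α := by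
    refine IsBigO.of_bound |c| ?_
    filter_upwards [eventually_ge_atTop 1] with t ht
    rw [norm_mul, Real.norm_eq_abs, Real.norm_eq_abs, Real.norm_eq_abs,
      abs_of_nonneg (sub_nonneg.2 (Nat.floor_le (by linarith))),
      abs_of_nonneg (Real.rpow_nonneg (by linarith) α)]
    refine mul_le_mul_of_nonneg_left ?_ (abs_nonneg c)
    linarith [Nat.lt_floor_add_one t, Real.one_le_rpow ht hα0]
  exact (hA.add hfrac).congr_left fun t => by ring

theorem exists_tendsto_sum_Icc_div_of_isBigO {b : ℕ → ℝ} {α : ℝ} (hα1 : α < 1)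
    (hB : (fun t : ℝ => ∑ k ∈ Icc 1 ⌊t⌋₊, b k) =O[atTop] fun t => t ^ α) :
    ∃ L, Tendsto (fun n : ℕ => ∑ k ∈ Icc 1 n, b k / k) atTop (𝓝 L) := by
  -- Mathlib's Abel summation runs over `Icc 0 n` and asks for a vanishing `0`-th coefficient
  set b₀ : ℕ → ℝ := fun k => if k = 0 then 0 else b k
  have hsum : ∀ (f : ℕ → ℝ) (n : ℕ), ∑ k ∈ Icc 0 n, f k * b₀ k = ∑ k ∈ Icc 1 n, f k * b k :=
    fun f n => by
      rw [← insert_Icc_add_one_left_eq_Icc n.zero_le, sum_insert (by simp), zero_add]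
      simp only [b₀, if_pos, mul_zero, zero_add]
      exact sum_congr rfl fun k hk => by rw [if_neg (by simp at hk; omega)]
  have hB₀ : (fun t : ℝ => ∑ k ∈ Icc 0 ⌊t⌋₊, b₀ k) =O[atTop] fun t => t ^ α := by
    refine hB.congr_left fun t => ?_
    simpa using (hsum (fun _ => 1) ⌊t⌋₊).symm
  have hinv : (fun t : ℝ => t⁻¹) =O[atTop] fun t => t ^ (-1 : ℝ) :=
    EventuallyEq.isBigO (by
      filter_upwards [eventually_gt_atTop 0] with t ht
      rw [Real.rpow_neg_one])
  have hderiv : (deriv fun t : ℝ => t⁻¹) =O[atTop] fun t => t ^ (-2 : ℝ) := by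
    rw [deriv_inv']
    refine (EventuallyEq.isBigO ?_).neg_left
    filter_upwards [eventually_gt_atTop 0] with t ht
    rw [Real.rpow_neg ht.le, Real.rpow_two]
  have hlim : Tendsto (fun t : ℝ => t⁻¹ * ∑ k ∈ Icc 0 ⌊t⌋₊, b₀ k) atTop (𝓝 0) := by
    refine (hinv.mul_atTop_rpow_of_isBigO_rpow _ _ (α - 1) hB₀ (by linarith)).trans_tendsto ?_
    simpa using tendsto_rpow_neg_atTop (y := 1 - α) (by linarith)
  have hderiv_cont : ContinuousOn (deriv fun t : ℝ => t⁻¹) (Set.Ici 1) := by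
    rw [deriv_inv']
    exact (continuousOn_inv₀.comp (continuous_pow 2).continuousOn
      fun t ht => pow_ne_zero 2 (by simp at ht; linarith)).neg
  refine ⟨_, (tendsto_sum_mul_atTop_nhds_one_sub_integral₀ (f := fun t : ℝ => t⁻¹) b₀ (l := 0)
    (by simp [b₀]) (fun t ht => differentiableAt_inv (by simp at ht; linarith))
    (hderiv_cont.locallyIntegrableOn measurableSet_Ici)
    (by simpa [Function.comp_def] using hlim.comp tendsto_natCast_atTop_atTop)
    (g := fun t => t ^ (α - 2)) (hderiv.mul_atTop_rpow_of_isBigO_rpow _ _ _ hB₀ (by linarith))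
    (integrableAtFilter_rpow_atTop_iff.2 (by linarith))).congr fun n => ?_⟩
  simpa only [inv_mul_eq_div] using hsum (fun k => (k : ℝ)⁻¹) n

theorem exists_tendsto_sum_Icc_div_sub_mul_log {a : ℕ → ℝ} {c α : ℝ} (hα0 : 0 ≤ α)
    (hα1 : α < 1)
    (hA : (fun t : ℝ => ∑ k ∈ Icc 1 ⌊t⌋₊, a k - c * t) =O[atTop] fun t => t ^ α) :
    ∃ L, Tendsto (fun x : ℝ => ∑ k ∈ Icc 1 ⌊x⌋₊, a k / k - c * Real.log x) atTop (𝓝 L) := by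
  -- `∑ (a k - c) / k` converges, and the harmonic numbers in `∑ c / k` carry the `c log n`
  obtain ⟨L, hL⟩ := exists_tendsto_sum_Icc_div_of_isBigO (b := fun k => a k - c) hα1
    ((isBigO_sum_Icc_sub_mul_floor hα0 hA).congr_left fun t => by
      rw [sum_sub_distrib, sum_const, Nat.card_Icc, add_tsub_cancel_right, nsmul_eq_mul, mul_comm])
  have hnat : Tendsto (fun n : ℕ => ∑ k ∈ Icc 1 n, a k / k - c * Real.log n) atTop
      (𝓝 (L + c * Real.eulerMascheroniConstant)) := by
    refine (hL.add (Real.tendsto_harmonic_sub_log.const_mul c)).congr fun n => ?_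
    simp only [harmonic_eq_sum_Icc, Rat.cast_sum, Rat.cast_inv, Rat.cast_natCast, sub_div,
      sum_sub_distrib, mul_sub, mul_sum, ← div_eq_mul_inv]
    ring
  have hlog_floor : Tendsto (fun x : ℝ => Real.log ⌊x⌋₊ - Real.log x) atTop (𝓝 0) := by
    have := (Real.continuousAt_log one_ne_zero).tendsto.comp tendsto_nat_floor_div_atTop
    rw [Real.log_one] at this
    refine this.congr' ?_
    filter_upwards [eventually_ge_atTop 1] with x hx
    have : 1 ≤ ⌊x⌋₊ := Nat.one_le_floor_iff x |>.2 hx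
    exact Real.log_div (by positivity) (by positivity)
  refine ⟨_, ((hnat.comp tendsto_nat_floor_atTop).add (hlog_floor.const_mul c)).congr fun x => ?_⟩
  simp only [Function.comp_apply]
  ring

theorem tendsto_sum_mul_comp_div_of_sum_eq_zero {ι : Type*} (s : Finset ι) {w n : ι → ℝ}
    (hn : ∀ i ∈ s, 0 < n i) (hw : ∑ i ∈ s, w i = 0) {S : ℝ → ℝ} {c L : ℝ}
    (hS : Tendsto (fun x => S x - c * Real.log x) atTop (𝓝 L)) :
    Tendsto (fun x => ∑ i ∈ s, w i * S (x / n i)) atTop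
      (𝓝 (-c * ∑ i ∈ s, w i * Real.log (n i))) := by
  have hterm : ∀ i ∈ s, Tendsto (fun x => w i * (S (x / n i) - c * Real.log (x / n i)
      - c * Real.log (n i))) atTop (𝓝 (w i * (L - c * Real.log (n i)))) := fun i hi =>
    ((hS.comp (tendsto_id.atTop_div_const (hn i hi))).sub_const _).const_mul _
  have hlimit : ∑ i ∈ s, w i * (L - c * Real.log (n i))
      = -c * ∑ i ∈ s, w i * Real.log (n i) := by
    simp only [mul_sub, sum_sub_distrib, ← sum_mul, hw, zero_mul, zero_sub, mul_sum,
      ← sum_neg_distrib]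
    exact sum_congr rfl fun i _ => by ring
  rw [← hlimit]
  refine (tendsto_finsetSum _ hterm).congr' ?_
  filter_upwards [eventually_gt_atTop 0] with x hx
  have hsplit : ∀ i ∈ s, w i * (S (x / n i) - c * Real.log (x / n i) - c * Real.log (n i))
      = w i * S (x / n i) - c * Real.log x * w i := fun i hi => by
    rw [Real.log_div hx.ne' (hn i hi).ne']
    ring
  rw [sum_congr rfl hsplit, sum_sub_distrib, ← mul_sum, hw, mul_zero, sub_zero]

section NormCount

variable {ι : Type*} (Nrm : ι → ℤ) (hfin : ∀ x : ℝ, {i | (Nrm i : ℝ) ≤ x}.Finite)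

noncomputable def invNormSum (x : ℝ) : ℝ := ∑ i ∈ (hfin x).toFinset, 1 / (Nrm i : ℝ)

theorem sum_toFinset_eq_sum_Icc_ncard (hge : ∀ i, 1 ≤ Nrm i) (g : ℝ → ℝ) (x : ℝ) :
    ∑ i ∈ (hfin x).toFinset, g (Nrm i)
      = ∑ k ∈ Icc 1 ⌊x⌋₊, ({i | Nrm i = k}.ncard : ℝ) * g k := by
  have hcast : ∀ i, ((Nrm i).toNat : ℤ) = Nrm i :=
    fun i => Int.toNat_of_nonneg (by linarith [hge i])
  have hmaps : ∀ i ∈ (hfin x).toFinset, (Nrm i).toNat ∈ Icc 1 ⌊x⌋₊ := fun i hi => by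
    rw [Set.Finite.mem_toFinset, Set.mem_ofPred, ← hcast, Int.cast_natCast] at hi
    exact mem_Icc.2 ⟨by linarith [hge i, hcast i], Nat.le_floor hi⟩
  rw [← sum_fiberwise_of_maps_to hmaps]
  refine sum_congr rfl fun k hk => ?_
  have hfiber : {i | Nrm i = k} = ↑{i ∈ (hfin x).toFinset | (Nrm i).toNat = k} := by
    ext i
    simp only [Set.mem_ofPred, coe_filter, Set.Finite.mem_toFinset]
    have hkx := (Nat.le_floor_iff' (by grind)).1 (mem_Icc.1 hk).2
    constructor
    · intro h
      exact ⟨by rw [h]; exact_mod_cast hkx, by rw [h, Int.toNat_natCast]⟩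
    · rintro ⟨-, h⟩
      rw [← hcast, h]
  rw [hfiber, Set.ncard_coe_finset, ← nsmul_eq_mul, ← sum_const]
  refine sum_congr rfl fun i hi => ?_
  rw [← (mem_filter.1 hi).2]
  exact_mod_cast congrArg (fun n : ℤ => g n) (hcast i).symm

theorem exists_tendsto_invNormSum_sub_mul_log (hge : ∀ i, 1 ≤ Nrm i) {c α : ℝ} (hα0 : 0 ≤ α)
    (hα1 : α < 1)
    (hcount : (fun x : ℝ => ((hfin x).toFinset.card : ℝ) - c * x) =O[atTop] fun x => x ^ α) :
    ∃ L, Tendsto (fun x => invNormSum Nrm hfin x - c * Real.log x) atTop (𝓝 L) := by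
  have hsum := sum_toFinset_eq_sum_Icc_ncard Nrm hfin hge
  obtain ⟨L, hL⟩ := exists_tendsto_sum_Icc_div_sub_mul_log
    (a := fun k => ({i | Nrm i = k}.ncard : ℝ)) hα0 hα1 (hcount.congr_left fun x => by
      rw [show ((hfin x).toFinset.card : ℝ) = _ by simpa using hsum (fun _ => 1) x])
  exact ⟨L, hL.congr fun x => by simp [invNormSum, hsum, div_eq_mul_inv]⟩

end NormCount

section Ramanujan

variable {X : Type*} (Nrm : (X →₀ ℕ) → ℤ)
  (hfin : ∀ x : ℝ, {A : X →₀ ℕ | (Nrm A : ℝ) ≤ x}.Finite)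

theorem sum_filter_le_eq_sum_add (hmul : ∀ A B, Nrm (A + B) = Nrm A * Nrm B)
    {D : X →₀ ℕ} (hD : 0 < Nrm D) (g : (X →₀ ℕ) → ℝ) (x : ℝ) :
    ∑ M ∈ (hfin x).toFinset with D ≤ M, g M = ∑ M ∈ (hfin (x / Nrm D)).toFinset, g (D + M) := by
  have hmem : ∀ M, D + M ∈ (hfin x).toFinset ↔ M ∈ (hfin (x / Nrm D)).toFinset := fun M => by
    simp only [Set.Finite.mem_toFinset, Set.mem_ofPred, hmul, Int.cast_mul,
      le_div_iff₀ (Int.cast_pos.2 hD : (0 : ℝ) < Nrm D), mul_comm]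
  symm
  refine sum_nbij' (D + ·) (· - D) (fun M hM => ?_) (fun M hM => ?_) (fun M _ => ?_)
    (fun M hM => ?_) (fun M _ => rfl)
  · exact mem_filter.2 ⟨(hmem M).2 hM, le_self_add⟩
  · obtain ⟨hMx, hDM⟩ := mem_filter.1 hM
    rwa [← hmem, add_tsub_cancel_of_le hDM]
  · exact add_tsub_cancel_left D M
  · exact add_tsub_cancel_of_le (mem_filter.1 hM).2

theorem ram_eq_sum_filter [DecidableEq X] (K M : X →₀ ℕ) :
    ram Nrm K M = ∑ D ∈ Iic K with D ≤ M, Nrm D * mob (K - D) := by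
  rw [ram]
  congr 1
  ext D
  simp only [mem_Iic, mem_filter, le_inf_iff, and_comm]

theorem sum_ram_div_norm_eq_sum_mob_mul [DecidableEq X] (hge : ∀ A, 1 ≤ Nrm A)
    (hmul : ∀ A B, Nrm (A + B) = Nrm A * Nrm B) (K : X →₀ ℕ) (x : ℝ) :
    ∑ M ∈ (hfin x).toFinset, (ram Nrm K M : ℝ) / Nrm M
      = ∑ D ∈ Iic K, (mob (K - D) : ℝ) * invNormSum Nrm hfin (x / Nrm D) := by
  have hpos : ∀ A, 0 < Nrm A := fun A => (hge A).trans_lt' one_pos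
  calc ∑ M ∈ (hfin x).toFinset, (ram Nrm K M : ℝ) / Nrm M
      = ∑ M ∈ (hfin x).toFinset, ∑ D ∈ Iic K with D ≤ M, (mob (K - D) : ℝ) * (Nrm D / Nrm M) := by
        refine sum_congr rfl fun M _ => ?_
        rw [ram_eq_sum_filter, Int.cast_sum, sum_div]
        refine sum_congr rfl fun D _ => ?_
        push_cast
        ring
    _ = ∑ D ∈ Iic K, ∑ M ∈ (hfin x).toFinset with D ≤ M, (mob (K - D) : ℝ) * (Nrm D / Nrm M) :=
        sum_comm' fun M D => by simp only [mem_filter]; tauto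
    _ = _ := by
        refine sum_congr rfl fun D _ => ?_
        rw [sum_filter_le_eq_sum_add Nrm hfin hmul (hpos D), invNormSum, mul_sum]
        refine sum_congr rfl fun M _ => ?_
        rw [hmul, Int.cast_mul, div_mul_cancel_left₀ (Int.cast_ne_zero.2 (hpos D).ne'), one_div]

end Ramanujan

theorem tendsto_sum_ram_div_norm_general {X : Type*} [DecidableEq X]
    (Nrm : (X →₀ ℕ) → ℤ)
    (hge : ∀ A, 1 ≤ Nrm A)
    (hmul : ∀ A B, Nrm (A + B) = Nrm A * Nrm B)
    (c α : ℝ) (hα0 : 0 ≤ α) (hα1 : α < 1)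
    (hfin : ∀ x : ℝ, {A : X →₀ ℕ | (Nrm A : ℝ) ≤ x}.Finite)
    (hcount : (fun x : ℝ => (((hfin x).toFinset.card : ℝ) - c * x))
      =O[atTop] fun x : ℝ => x ^ α)
    (K : X →₀ ℕ) (hK : K ≠ 0) :
    Tendsto (fun x : ℝ => ∑ M ∈ (hfin x).toFinset, (ram Nrm K M : ℝ) / (Nrm M : ℝ))
      atTop
      (𝓝 (-c * ∑ D ∈ Finset.Iic K, (mob (K - D) : ℝ) * Real.log (Nrm D))) := by
  obtain ⟨L, hL⟩ := exists_tendsto_invNormSum_sub_mul_log Nrm hfin hge hα0 hα1 hcount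
  have hmob : ∑ D ∈ Iic K, (mob (K - D) : ℝ) = 0 := by exact_mod_cast sum_Iic_mob_sub hK
  have hpos : ∀ D ∈ Iic K, (0 : ℝ) < Nrm D := fun D _ => by exact_mod_cast (hge D).trans_lt' one_pos
  refine (tendsto_sum_mul_comp_div_of_sum_eq_zero (Iic K) hpos hmob hL).congr fun x => ?_
  exact (sum_ram_div_norm_eq_sum_mob_mul Nrm hfin hge hmul K x).symm

/-- If `X` is at most countable and `#{A : N(A) ≤ x} = c·x + O(x^α)` with `c > 0` and
`0 ≤ α < 1`, then for `K ≠ 0` the series `∑_M C_K(M)/N(M)`, summed in increasing order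
of the norm, converges to `−c·Λ(K)` where `Λ(K) = ∑_{D ≤ K} μ(K − D)·log N(D)`. -/
theorem tendsto_sum_ram_div_norm {X : Type*} [Nonempty X] [Countable X] [DecidableEq X]
    (Nrm : (X →₀ ℕ) → ℤ)
    (hge : ∀ A, 1 ≤ Nrm A) (h0 : Nrm 0 = 1) (hgt : ∀ A, A ≠ 0 → 1 < Nrm A)
    (hmul : ∀ A B, Nrm (A + B) = Nrm A * Nrm B)
    (c α : ℝ) (hc : 0 < c) (hα0 : 0 ≤ α) (hα1 : α < 1)
    (hfin : ∀ x : ℝ, {A : X →₀ ℕ | (Nrm A : ℝ) ≤ x}.Finite)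
    (hcount : (fun x : ℝ => (((hfin x).toFinset.card : ℝ) - c * x))
      =O[atTop] fun x : ℝ => x ^ α)
    (K : X →₀ ℕ) (hK : K ≠ 0) :
    Tendsto (fun x : ℝ => ∑ M ∈ (hfin x).toFinset, (ram Nrm K M : ℝ) / (Nrm M : ℝ))
      atTop
      (𝓝 (-c * ∑ D ∈ Finset.Iic K, (mob (K - D) : ℝ) * Real.log (Nrm D))) :=
  tendsto_sum_ram_div_norm_general Nrm hge hmul c α hα0 hα1 hfin hcount K hK
end

section
/- Suppose X is at most countable and [x] = c·x + O(x^α) for some constant c > 0 and some α ∈ [0, 1). Then for every fixed K ∈ I_X with K ≠ 0, one has Σ_{M ∈ I_X, N(M) ≤ x} C_K(M) = O(x^α) as x → ∞. -/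
open Finset Filter Topology Asymptotics
open scoped Classical

section Mobius

variable {X : Type*}

lemma mob_ne_zero_iff {D : X →₀ ℕ} : mob D ≠ 0 ↔ ∀ x, D x ≤ 1 := by
  unfold mob
  split_ifs with h <;> simp [h]

lemma mob_eq_neg_one_pow_card_support {D : X →₀ ℕ} (hD : ∀ x, D x ≤ 1) :
    mob D = (-1) ^ #D.support := by
  have hsum : (D.sum fun _ n => n) = #D.support := by
    rw [Finsupp.sum, card_eq_sum_ones]
    exact sum_congr rfl fun x hx =>
      (hD x).antisymm (Nat.one_le_iff_ne_zero.2 (Finsupp.mem_support_iff.1 hx))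
  rw [mob, if_pos hD, hsum]

lemma eq_of_support_eq_of_le_one {D E : X →₀ ℕ} (hD : ∀ x, D x ≤ 1) (hE : ∀ x, E x ≤ 1)
    (h : D.support = E.support) : D = E := by
  ext x
  by_cases hx : x ∈ D.support
  · have hx' := h ▸ hx
    rw [Finsupp.mem_support_iff] at hx hx'
    have := hD x; have := hE x; omega
  · have hx' := h ▸ hx
    rw [Finsupp.notMem_support_iff] at hx hx'
    rw [hx, hx']

variable [DecidableEq X]

/-- Squarefree `D ≤ K` correspond to subsets of `K.support` via `D ↦ D.support`. -/
lemma sum_mob_Iic_eq_zero {K : X →₀ ℕ} (hK : K ≠ 0) : ∑ D ∈ Iic K, mob D = 0 := by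
  calc ∑ D ∈ Iic K, mob D = ∑ S ∈ K.support.powerset, (-1) ^ #S := by
        refine sum_bij_ne_zero (fun D _ _ => D.support) ?_ ?_ ?_ ?_
        · intro D hD _
          exact mem_powerset.2 (Finsupp.support_mono (mem_Iic.1 hD))
        · intro D _ hD E _ hE h
          exact eq_of_support_eq_of_le_one (mob_ne_zero_iff.1 hD) (mob_ne_zero_iff.1 hE) h
        · intro S hS _
          have hval : ∀ x, Multiset.toFinsupp S.val x = if x ∈ S then 1 else 0 := fun x =>
            Multiset.count_eq_of_nodup S.nodup
          have hle : ∀ x, Multiset.toFinsupp S.val x ≤ 1 := fun x => by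
            rw [hval]; split_ifs <;> simp
          refine ⟨Multiset.toFinsupp S.val, mem_Iic.2 fun x => ?_, mob_ne_zero_iff.2 hle, ?_⟩
          · rw [hval]
            split_ifs with hx
            · exact Nat.one_le_iff_ne_zero.2 (Finsupp.mem_support_iff.1 (mem_powerset.1 hS hx))
            · exact Nat.zero_le _
          · simp [Multiset.toFinsupp_support]
        · intro D _ hD
          exact mob_eq_neg_one_pow_card_support (mob_ne_zero_iff.1 hD)
    _ = 0 := sum_powerset_neg_one_pow_card_of_nonempty (Finsupp.support_nonempty_iff.2 hK)

lemma sum_mob_tsub_Iic_eq_zero {K : X →₀ ℕ} (hK : K ≠ 0) : ∑ D ∈ Iic K, mob (K - D) = 0 := by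
  rw [← sum_mob_Iic_eq_zero hK]
  refine sum_nbij' (K - ·) (K - ·) (fun D _ => by simp) (fun D _ => by simp)
    (fun D hD => tsub_tsub_cancel_of_le (mem_Iic.1 hD))
    (fun D hD => tsub_tsub_cancel_of_le (mem_Iic.1 hD)) fun _ _ => rfl

end Mobius

section Counting

variable {X : Type*} {Nrm : (X →₀ ℕ) → ℤ}
  (hfin : ∀ x : ℝ, {A : X →₀ ℕ | (Nrm A : ℝ) ≤ x}.Finite)

lemma card_filter_le_eq_card_div (hmul : ∀ A B, Nrm (A + B) = Nrm A * Nrm B)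
    {D : X →₀ ℕ} (hD : 0 < Nrm D) (x : ℝ) :
    #{M ∈ (hfin x).toFinset | D ≤ M} = #(hfin (x / Nrm D)).toFinset := by
  have hD' : (0 : ℝ) < Nrm D := by exact_mod_cast hD
  have hnorm : ∀ M, (Nrm (D + M) : ℝ) = Nrm D * Nrm M := fun M => by push_cast [hmul]; rfl
  have hmem : ∀ y M, M ∈ (hfin y).toFinset ↔ (Nrm M : ℝ) ≤ y := fun _ _ =>
    Set.Finite.mem_toFinset _
  refine card_nbij' (· - D) (· + D) (fun M hM => ?_) (fun M hM => ?_)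
    (fun M hM => tsub_add_cancel_of_le (mem_filter.1 hM).2) fun M _ => add_tsub_cancel_right M D
  · simp only [coe_filter, mem_coe, hmem, Set.mem_ofPred] at hM ⊢
    rw [le_div_iff₀' hD', ← hnorm, add_tsub_cancel_of_le hM.2]
    exact hM.1
  · simp only [coe_filter, mem_coe, hmem, Set.mem_ofPred] at hM ⊢
    rw [add_comm, hnorm, ← le_div_iff₀' hD']
    exact ⟨hM, le_self_add⟩

variable [DecidableEq X]

lemma sum_ram_eq_sum_Iic (hpos : ∀ A, 0 < Nrm A) (hmul : ∀ A B, Nrm (A + B) = Nrm A * Nrm B)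
    (K : X →₀ ℕ) (x : ℝ) :
    ∑ M ∈ (hfin x).toFinset, ram Nrm K M
      = ∑ D ∈ Iic K, Nrm D * mob (K - D) * #(hfin (x / Nrm D)).toFinset := by
  have hram : ∀ M, ram Nrm K M = ∑ D ∈ Iic K, if D ≤ M then Nrm D * mob (K - D) else 0 := by
    intro M
    rw [ram, ← sum_filter]
    congr 1
    ext D
    simp [le_inf_iff, and_comm]
  simp_rw [hram]
  rw [sum_comm]
  refine sum_congr rfl fun D _ => ?_
  rw [← sum_filter, sum_const, nsmul_eq_mul, mul_comm,
    card_filter_le_eq_card_div hfin hmul (hpos D)]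

lemma sum_ram_eq_sum_Iic_mul_sub (hpos : ∀ A, 0 < Nrm A)
    (hmul : ∀ A B, Nrm (A + B) = Nrm A * Nrm B) {K : X →₀ ℕ} (hK : K ≠ 0) (c x : ℝ) :
    ((∑ M ∈ (hfin x).toFinset, ram Nrm K M : ℤ) : ℝ)
      = ∑ D ∈ Iic K, (Nrm D * mob (K - D) : ℝ)
          * (#(hfin (x / Nrm D)).toFinset - c * (x / Nrm D)) := by
  have hmain : ∑ D ∈ Iic K, (Nrm D * mob (K - D) : ℝ) * (c * (x / Nrm D)) = 0 := by
    calc _ = c * x * ((∑ D ∈ Iic K, mob (K - D) : ℤ) : ℝ) := by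
          push_cast
          rw [mul_sum]
          refine sum_congr rfl fun D _ => ?_
          have : (Nrm D : ℝ) ≠ 0 := by exact_mod_cast (hpos D).ne'
          field_simp
      _ = 0 := by rw [sum_mob_tsub_Iic_eq_zero hK]; simp
  simp only [mul_sub, sum_sub_distrib, hmain, sub_zero]
  rw [sum_ram_eq_sum_Iic hfin hpos hmul]
  push_cast
  rfl

end Counting

lemma isBigO_comp_div_const {f : ℝ → ℝ} {α a : ℝ} (hf : f =O[atTop] fun x => x ^ α)
    (ha : 0 < a) : (fun x => f (x / a)) =O[atTop] fun x => x ^ α := by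
  have hscale : (fun x : ℝ => (x / a) ^ α) =ᶠ[atTop] fun x => (a ^ α)⁻¹ * x ^ α := by
    filter_upwards [eventually_ge_atTop 0] with x hx
    rw [Real.div_rpow hx ha.le, div_eq_inv_mul]
  exact (hf.comp_tendsto (tendsto_id.atTop_div_const ha)).trans
    (hscale.trans_isBigO ((isBigO_refl _ _).const_mul_left _))

theorem sum_ram_ne_zero_asymptotic_general {X : Type*} [DecidableEq X]
    (Nrm : (X →₀ ℕ) → ℤ)
    (hge : ∀ A, 1 ≤ Nrm A)
    (hmul : ∀ A B, Nrm (A + B) = Nrm A * Nrm B)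
    (c α : ℝ)
    (hfin : ∀ x : ℝ, {A : X →₀ ℕ | (Nrm A : ℝ) ≤ x}.Finite)
    (hcount : (fun x : ℝ => (((hfin x).toFinset.card : ℝ) - c * x))
      =O[atTop] fun x : ℝ => x ^ α)
    (K : X →₀ ℕ) (hK : K ≠ 0) :
    (fun x : ℝ => ((∑ M ∈ (hfin x).toFinset, ram Nrm K M : ℤ) : ℝ))
      =O[atTop] fun x : ℝ => x ^ α := by
  have hpos : ∀ A, 0 < Nrm A := fun A => one_pos.trans_le (hge A)
  simp_rw [sum_ram_eq_sum_Iic_mul_sub hfin hpos hmul hK c]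
  exact IsBigO.fun_sum fun D _ =>
    (isBigO_comp_div_const hcount (by exact_mod_cast hpos D)).const_mul_left _

/-- If `#{A : N(A) ≤ x} = c·x + O(x^α)` with `c > 0` and `0 ≤ α < 1`, then for every
fixed `K ≠ 0`, `∑_{N(M) ≤ x} C_K(M) = O(x^α)` as `x → ∞`. -/
theorem sum_ram_ne_zero_asymptotic {X : Type*} [Nonempty X] [Countable X] [DecidableEq X]
    (Nrm : (X →₀ ℕ) → ℤ)
    (hge : ∀ A, 1 ≤ Nrm A) (h0 : Nrm 0 = 1) (hgt : ∀ A, A ≠ 0 → 1 < Nrm A)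
    (hmul : ∀ A B, Nrm (A + B) = Nrm A * Nrm B)
    (c α : ℝ) (hc : 0 < c) (hα0 : 0 ≤ α) (hα1 : α < 1)
    (hfin : ∀ x : ℝ, {A : X →₀ ℕ | (Nrm A : ℝ) ≤ x}.Finite)
    (hcount : (fun x : ℝ => (((hfin x).toFinset.card : ℝ) - c * x))
      =O[atTop] fun x : ℝ => x ^ α)
    (K : X →₀ ℕ) (hK : K ≠ 0) :
    (fun x : ℝ => ((∑ M ∈ (hfin x).toFinset, ram Nrm K M : ℤ) : ℝ))
      =O[atTop] fun x : ℝ => x ^ α :=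
  sum_ram_ne_zero_asymptotic_general Nrm hge hmul c α hfin hcount K hK
end

section
/- Suppose X is at most countable and [x] = c·x + O(x^α) for some constant c > 0 and some α ∈ [0, 1). Define S(x, y) = Σ_{M, K ∈ I_X, N(M) ≤ x, N(K) ≤ y} C_K(M). Fix λ > (2 − α)/(1 − α). If y = y(x) satisfies y^λ ≪ x, then S(x, y) = c·x + o(x) as x → ∞. -/
open Finset Filter Topology Asymptotics
open scoped Classical

set_option linter.unusedSectionVars false
set_option maxHeartbeats 1000000

lemma Nrm_mono {X : Type*} {Nrm : (X →₀ ℕ) → ℤ}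
    (hge : ∀ A, 1 ≤ Nrm A) (hmul : ∀ A B, Nrm (A + B) = Nrm A * Nrm B)
    {A B : X →₀ ℕ} (h : A ≤ B) : Nrm A ≤ Nrm B := by
  have e := hmul A (B - A)
  rw [add_tsub_cancel_of_le h] at e
  nlinarith [hge (B - A), hge A]

lemma mob_abs {X : Type*} (A : X →₀ ℕ) : |mob A| ≤ 1 := by
  unfold mob; split
  · rw [abs_pow, abs_neg, abs_one, one_pow]
  · simp

lemma mob_zero {X : Type*} : mob (0 : X →₀ ℕ) = 1 := by simp [mob]

lemma mob_add_single {X : Type*} [DecidableEq X] {E : X →₀ ℕ} {x₀ : X} (h : E x₀ = 0) :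
    mob (E + Finsupp.single x₀ 1) = - mob E := by
  have hsum : ((E + Finsupp.single x₀ 1).sum fun _ n => n)
      = (E.sum fun _ n => n) + 1 := by
    rw [Finsupp.sum_add_index' (fun _ => rfl) (fun _ _ _ => rfl),
      Finsupp.sum_single_index rfl]
  have hcond : (∀ x, ((E + Finsupp.single x₀ 1 : X →₀ ℕ)) x ≤ 1) ↔ (∀ x, E x ≤ 1) := by
    constructor
    · intro H x
      rcases eq_or_ne x x₀ with rfl | hx
      · simp [h]
      · have := H x
        simpa [Finsupp.single_apply, hx.symm] using this
    · intro H x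
      rcases eq_or_ne x x₀ with rfl | hx
      · simp [h]
      · have := H x
        simpa [Finsupp.single_apply, hx.symm] using this
  unfold mob
  by_cases hc : ∀ x, E x ≤ 1
  · rw [if_pos (hcond.2 hc), if_pos hc, hsum, pow_succ]
    ring
  · rw [if_neg (fun hh => hc (hcond.1 hh)), if_neg hc, neg_zero]

lemma mob_eq_zero_of_two_le {X : Type*} {E : X →₀ ℕ} {x₀ : X} (h : 2 ≤ E x₀) :
    mob E = 0 := by
  unfold mob
  rw [if_neg]
  intro H
  exact absurd (H x₀) (by omega)

lemma sum_mob_Iic {X : Type*} [DecidableEq X] {K : X →₀ ℕ} (hK : K ≠ 0) :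
    ∑ E ∈ Finset.Iic K, mob E = 0 := by
  obtain ⟨x₀, hx₀⟩ := Finsupp.support_nonempty_iff.2 hK
  have hKx : 1 ≤ K x₀ := Nat.one_le_iff_ne_zero.2 (Finsupp.mem_support_iff.1 hx₀)
  set δ : X →₀ ℕ := Finsupp.single x₀ 1 with hδ
  have hδle : ∀ {E : X →₀ ℕ}, 1 ≤ E x₀ → δ ≤ E := by
    intro E hE
    rw [hδ, Finsupp.single_le_iff]
    exact hE
  have hsub_apply : ∀ (E : X →₀ ℕ), (E - δ) x₀ = E x₀ - 1 := by
    intro E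
    rw [Finsupp.tsub_apply, hδ, Finsupp.single_eq_same]
  have hadd_apply : ∀ (E : X →₀ ℕ), (E + δ) x₀ = E x₀ + 1 := by
    intro E
    rw [Finsupp.add_apply, hδ, Finsupp.single_eq_same]
  refine Finset.sum_involution
    (fun E _ => if E x₀ = 0 then E + δ else if E x₀ = 1 then E - δ else E) ?_ ?_ ?_ ?_
  · intro E _
    beta_reduce
    by_cases h0 : E x₀ = 0
    · rw [if_pos h0, mob_add_single h0]
      ring
    · by_cases h1 : E x₀ = 1
      · rw [if_neg h0, if_pos h1]
        have hle : δ ≤ E := hδle (by omega)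
        have h0' : (E - δ) x₀ = 0 := by rw [hsub_apply, h1]
        have : mob ((E - δ) + δ) = - mob (E - δ) := mob_add_single h0'
        rw [tsub_add_cancel_of_le hle] at this
        rw [this]; ring
      · rw [if_neg h0, if_neg h1, mob_eq_zero_of_two_le (x₀ := x₀) (by omega)]
        ring
  · intro E _ hne
    beta_reduce
    by_cases h0 : E x₀ = 0
    · rw [if_pos h0]
      intro hEq
      have := congrArg (fun f : X →₀ ℕ => f x₀) hEq
      simp only [hadd_apply, h0] at this
      omega
    · by_cases h1 : E x₀ = 1
      · rw [if_neg h0, if_pos h1]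
        intro hEq
        have := congrArg (fun f : X →₀ ℕ => f x₀) hEq
        simp only [hsub_apply, h1] at this
        omega
      · exact absurd (mob_eq_zero_of_two_le (x₀ := x₀) (by omega)) hne
  · intro E hE
    beta_reduce
    rw [Finset.mem_Iic] at hE ⊢
    by_cases h0 : E x₀ = 0
    · rw [if_pos h0]
      intro x
      rcases eq_or_ne x x₀ with rfl | hx
      · rw [hadd_apply, h0]; omega
      · rw [Finsupp.add_apply, hδ, Finsupp.single_apply, if_neg (by exact fun h => hx h.symm)]
        simpa using hE x
    · by_cases h1 : E x₀ = 1
      · rw [if_neg h0, if_pos h1]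
        exact le_trans tsub_le_self hE
      · rw [if_neg h0, if_neg h1]; exact hE
  · intro E hE
    beta_reduce
    by_cases h0 : E x₀ = 0
    · simp only [if_pos h0]
      have h1' : (E + δ) x₀ = 1 := by rw [hadd_apply, h0]
      rw [if_neg (by omega), if_pos h1', add_tsub_cancel_right]
    · by_cases h1 : E x₀ = 1
      · simp only [if_neg h0, if_pos h1]
        have h0' : (E - δ) x₀ = 0 := by rw [hsub_apply, h1]
        rw [if_pos h0', tsub_add_cancel_of_le (hδle (by omega))]
      · simp only [if_neg h0, if_neg h1]

lemma sum_Iic_reflect {X : Type*} [DecidableEq X] (K : X →₀ ℕ) (f : (X →₀ ℕ) → ℤ) :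
    ∑ D ∈ Finset.Iic K, f (K - D) = ∑ E ∈ Finset.Iic K, f E := by
  apply Finset.sum_nbij' (fun D => K - D) (fun E => K - E)
  · intro D hD; exact Finset.mem_Iic.2 tsub_le_self
  · intro E hE; exact Finset.mem_Iic.2 tsub_le_self
  · intro D hD; exact tsub_tsub_cancel_of_le (Finset.mem_Iic.1 hD)
  · intro E hE; exact tsub_tsub_cancel_of_le (Finset.mem_Iic.1 hE)
  · intro D hD; rfl

section Counting
variable {X : Type*} [DecidableEq X] {Nrm : (X →₀ ℕ) → ℤ}

lemma Nrm_real_pos (hge : ∀ A, 1 ≤ Nrm A) (A : X →₀ ℕ) : (0:ℝ) < (Nrm A : ℝ) := by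
  have := hge A; exact_mod_cast lt_of_lt_of_le one_pos this

lemma Nrm_real_one_le (hge : ∀ A, 1 ≤ Nrm A) (A : X →₀ ℕ) : (1:ℝ) ≤ (Nrm A : ℝ) := by
  exact_mod_cast hge A

lemma card_shift (hge : ∀ A, 1 ≤ Nrm A) (hmul : ∀ A B, Nrm (A + B) = Nrm A * Nrm B)
    (hfin : ∀ x : ℝ, {A : X →₀ ℕ | (Nrm A : ℝ) ≤ x}.Finite) (D : X →₀ ℕ) (x : ℝ) :
    ((hfin x).toFinset.filter (fun M => D ≤ M)).card
      = (hfin (x / Nrm D)).toFinset.card := by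
  have hDpos := Nrm_real_pos hge D
  apply Finset.card_bij (fun M _ => M - D)
  · intro M hM
    rw [Finset.mem_filter, Set.Finite.mem_toFinset, Set.mem_setOf_eq] at hM
    rw [Set.Finite.mem_toFinset, Set.mem_setOf_eq, le_div_iff₀ hDpos]
    have e := hmul D (M - D)
    rw [add_tsub_cancel_of_le hM.2] at e
    have : (Nrm M : ℝ) = (Nrm D : ℝ) * (Nrm (M - D) : ℝ) := by rw [e]; push_cast; ring
    calc (Nrm (M-D) : ℝ) * Nrm D = Nrm M := by rw [this]; ring
    _ ≤ x := hM.1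
  · intro M₁ hM₁ M₂ hM₂ hEq
    rw [Finset.mem_filter] at hM₁ hM₂
    have : M₁ - D + D = M₂ - D + D := by rw [hEq]
    rwa [tsub_add_cancel_of_le hM₁.2, tsub_add_cancel_of_le hM₂.2] at this
  · intro M' hM'
    rw [Set.Finite.mem_toFinset, Set.mem_setOf_eq, le_div_iff₀ hDpos] at hM'
    refine ⟨M' + D, ?_, by rw [add_tsub_cancel_right]⟩
    rw [Finset.mem_filter, Set.Finite.mem_toFinset, Set.mem_setOf_eq]
    constructor
    · have : (Nrm (M' + D) : ℝ) = (Nrm M' : ℝ) * (Nrm D : ℝ) := by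
        rw [hmul M' D]; push_cast; ring
      rw [this]; exact hM'
    · exact le_add_self

lemma Iic_eq_filter_inf (K M : X →₀ ℕ) :
    Finset.Iic (M ⊓ K) = (Finset.Iic K).filter (fun D => D ≤ M) := by
  ext D
  simp [Finset.mem_Iic, Finset.mem_filter, le_inf_iff, and_comm]

lemma swap_inner (hge : ∀ A, 1 ≤ Nrm A) (hmul : ∀ A B, Nrm (A + B) = Nrm A * Nrm B)
    (hfin : ∀ x : ℝ, {A : X →₀ ℕ | (Nrm A : ℝ) ≤ x}.Finite) (K : X →₀ ℕ) (x : ℝ)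
    (h : (X →₀ ℕ) → ℝ) :
    ∑ M ∈ (hfin x).toFinset, ∑ D ∈ Finset.Iic (M ⊓ K), h D
      = ∑ D ∈ Finset.Iic K, h D * (hfin (x / Nrm D)).toFinset.card := by
  have step1 : ∀ M, ∑ D ∈ Finset.Iic (M ⊓ K), h D
      = ∑ D ∈ Finset.Iic K, if D ≤ M then h D else 0 := by
    intro M
    rw [Iic_eq_filter_inf, Finset.sum_filter]
  simp only [step1]
  rw [Finset.sum_comm]
  refine Finset.sum_congr rfl fun D _ => ?_
  rw [← card_shift hge hmul hfin D x, ← Finset.sum_filter, Finset.sum_const,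
    nsmul_eq_mul, mul_comm]

lemma swap_outer (hge : ∀ A, 1 ≤ Nrm A) (hmul : ∀ A B, Nrm (A + B) = Nrm A * Nrm B)
    (hfin : ∀ x : ℝ, {A : X →₀ ℕ | (Nrm A : ℝ) ≤ x}.Finite) (y : ℝ)
    (g : (X →₀ ℕ) → ℝ) :
    ∑ K ∈ (hfin y).toFinset, ∑ D ∈ Finset.Iic K, g D
      = ∑ D ∈ (hfin y).toFinset, g D * (hfin (y / Nrm D)).toFinset.card := by
  have step1 : ∀ K ∈ (hfin y).toFinset, ∑ D ∈ Finset.Iic K, g D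
      = ∑ D ∈ (hfin y).toFinset, if D ≤ K then g D else 0 := by
    intro K hK
    rw [Set.Finite.mem_toFinset, Set.mem_setOf_eq] at hK
    rw [← Finset.sum_filter]
    apply Finset.sum_congr _ (fun _ _ => rfl)
    ext D
    rw [Finset.mem_Iic, Finset.mem_filter, Set.Finite.mem_toFinset, Set.mem_setOf_eq]
    constructor
    · intro hD
      refine ⟨le_trans ?_ hK, hD⟩
      exact_mod_cast Nrm_mono hge hmul hD
    · exact fun h => h.2
  rw [Finset.sum_congr rfl step1, Finset.sum_comm]
  refine Finset.sum_congr rfl fun D _ => ?_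
  rw [← card_shift hge hmul hfin D y, ← Finset.sum_filter, Finset.sum_const,
    nsmul_eq_mul, mul_comm]

end Counting

section Bounds
variable {X : Type*} [DecidableEq X] {Nrm : (X →₀ ℕ) → ℤ}

lemma card_empty_of_lt_one (hge : ∀ A, 1 ≤ Nrm A)
    (hfin : ∀ x : ℝ, {A : X →₀ ℕ | (Nrm A : ℝ) ≤ x}.Finite) {t : ℝ} (ht : t < 1) :
    (hfin t).toFinset.card = 0 := by
  rw [Finset.card_eq_zero]
  ext A
  simp only [Set.Finite.mem_toFinset, Set.mem_setOf_eq, Finset.notMem_empty, iff_false]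
  intro h
  exact absurd (le_trans (Nrm_real_one_le hge A) h) (not_le.2 ht)

lemma card_mono_t (hfin : ∀ x : ℝ, {A : X →₀ ℕ | (Nrm A : ℝ) ≤ x}.Finite) {t t' : ℝ}
    (h : t ≤ t') : (hfin t).toFinset.card ≤ (hfin t').toFinset.card := by
  apply Finset.card_le_card
  intro A hA
  rw [Set.Finite.mem_toFinset, Set.mem_setOf_eq] at hA ⊢
  exact le_trans hA h

lemma err_bound (hge : ∀ A, 1 ≤ Nrm A)
    (hfin : ∀ x : ℝ, {A : X →₀ ℕ | (Nrm A : ℝ) ≤ x}.Finite)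
    {c α : ℝ} (hc : 0 < c) (hα0 : 0 ≤ α) (hα1 : α < 1)
    (hcount : (fun x : ℝ => (((hfin x).toFinset.card : ℝ) - c * x))
      =O[atTop] fun x : ℝ => x ^ α) :
    ∃ C > 0, ∀ t : ℝ, 0 < t →
      |((hfin t).toFinset.card : ℝ) - c * t| ≤ C * t ^ α := by
  obtain ⟨C, hC⟩ := hcount.bound
  obtain ⟨x₀, hx₀⟩ := eventually_atTop.1 hC
  set x₁ : ℝ := max x₀ 1 with hx₁def
  have hx₁1 : (1:ℝ) ≤ x₁ := le_max_right _ _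
  set B : ℝ := ((hfin x₁).toFinset.card : ℝ) + c * x₁ with hBdef
  have hB0 : 0 ≤ B := by positivity
  refine ⟨|C| + c + B + 1, by positivity, fun t ht => ?_⟩
  have htα : 0 < t ^ α := Real.rpow_pos_of_pos ht α
  rcases le_or_gt x₁ t with h1 | h1
  · have := hx₀ t (le_trans (le_max_left _ _) h1)
    rw [Real.norm_eq_abs, Real.norm_eq_abs, abs_of_pos htα] at this
    calc |((hfin t).toFinset.card : ℝ) - c * t| ≤ C * t ^ α := this
    _ ≤ (|C| + c + B + 1) * t ^ α := by
        apply mul_le_mul_of_nonneg_right _ htα.le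
        calc C ≤ |C| := le_abs_self C
        _ ≤ |C| + c + B + 1 := by linarith
  · rcases lt_or_ge t 1 with h2 | h2
    · rw [card_empty_of_lt_one hge hfin h2]
      have htle : t ≤ t ^ α := by
        calc t = t ^ (1:ℝ) := (Real.rpow_one t).symm
        _ ≤ t ^ α := Real.rpow_le_rpow_of_exponent_ge ht h2.le hα1.le
      rw [Nat.cast_zero, zero_sub, abs_neg, abs_of_pos (by positivity)]
      calc c * t ≤ c * t ^ α := by nlinarith
      _ ≤ (|C| + c + B + 1) * t ^ α := by
          apply mul_le_mul_of_nonneg_right _ htα.le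
          have := abs_nonneg C; linarith
    · have h1α : (1:ℝ) ≤ t ^ α := Real.one_le_rpow h2 hα0
      have hcard : ((hfin t).toFinset.card : ℝ) ≤ ((hfin x₁).toFinset.card : ℝ) := by
        exact_mod_cast card_mono_t hfin h1.le
      have : |((hfin t).toFinset.card : ℝ) - c * t| ≤ B := by
        rw [abs_le]
        constructor
        · have h3 : 0 ≤ ((hfin t).toFinset.card : ℝ) := by positivity
          have h4 : c * t ≤ c * x₁ := by nlinarith
          have h5 : (0:ℝ) ≤ ((hfin x₁).toFinset.card : ℝ) := by positivity
          rw [hBdef]; nlinarith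
        · have h4 : (0:ℝ) ≤ c * t := by positivity
          rw [hBdef]; nlinarith
      calc |((hfin t).toFinset.card : ℝ) - c * t| ≤ B := this
      _ = B * 1 := (mul_one B).symm
      _ ≤ (|C| + c + B + 1) * t ^ α := by
          apply mul_le_mul _ h1α zero_le_one (by positivity)
          have := abs_nonneg C; linarith

lemma lin_bound (hge : ∀ A, 1 ≤ Nrm A)
    (hfin : ∀ x : ℝ, {A : X →₀ ℕ | (Nrm A : ℝ) ≤ x}.Finite)
    {c α C : ℝ} (hc : 0 < c) (hα0 : 0 ≤ α) (hα1 : α < 1) (hC : 0 < C)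
    (herr : ∀ t : ℝ, 0 < t →
      |((hfin t).toFinset.card : ℝ) - c * t| ≤ C * t ^ α) :
    ∀ t : ℝ, 0 < t → ((hfin t).toFinset.card : ℝ) ≤ (c + C) * t := by
  intro t ht
  rcases lt_or_ge t 1 with h2 | h2
  · rw [card_empty_of_lt_one hge hfin h2, Nat.cast_zero]
    positivity
  · have := herr t ht
    rw [abs_le] at this
    have htα : t ^ α ≤ t := by
      calc t ^ α ≤ t ^ (1:ℝ) := Real.rpow_le_rpow_of_exponent_le h2 hα1.le
      _ = t := Real.rpow_one t
    nlinarith [this.2]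

end Bounds

lemma toNat_cast_real {n : ℤ} (h : 0 ≤ n) : ((n.toNat : ℝ)) = (n : ℝ) := by
  exact_mod_cast congrArg (fun z : ℤ => (z : ℝ)) (Int.toNat_of_nonneg h)

lemma dyadic_bound {X : Type*} [DecidableEq X] {Nrm : (X →₀ ℕ) → ℤ}
    (hge : ∀ A, 1 ≤ Nrm A)
    (hfin : ∀ x : ℝ, {A : X →₀ ℕ | (Nrm A : ℝ) ≤ x}.Finite)
    {α C₁ : ℝ} (hα0 : 0 ≤ α) (hα1 : α < 1) (hC₁ : 0 < C₁)
    (hlin : ∀ t : ℝ, 0 < t → ((hfin t).toFinset.card : ℝ) ≤ C₁ * t)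
    {y : ℝ} (hy : 1 ≤ y) :
    ∑ D ∈ (hfin y).toFinset, (Nrm D : ℝ) ^ (-α)
      ≤ (4 * C₁ / (2 ^ (1-α) - 1)) * y ^ (1-α) := by
  set r : ℝ := 2 ^ (1-α) with hr
  have hr1 : 1 < r := by
    rw [hr]
    rw [show (1:ℝ) = (2:ℝ) ^ (0:ℝ) by rw [Real.rpow_zero]]
    exact Real.rpow_lt_rpow_of_exponent_lt (by norm_num) (by linarith)
  have hr0 : 0 < r - 1 := by linarith
  set J : ℕ := Nat.log 2 ⌊y⌋₊ with hJ
  have hmaps : ∀ D ∈ (hfin y).toFinset, Nat.log 2 (Nrm D).toNat ∈ Finset.range (J+1) := by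
    intro D hD
    rw [Set.Finite.mem_toFinset, Set.mem_setOf_eq] at hD
    rw [Finset.mem_range, Nat.lt_succ_iff, hJ]
    apply Nat.log_mono_right
    apply Nat.le_floor
    rw [toNat_cast_real (by linarith [hge D] : (0:ℤ) ≤ Nrm D)]
    exact hD
  rw [← Finset.sum_fiberwise_of_maps_to hmaps (fun D => (Nrm D : ℝ) ^ (-α))]
  have hfiber : ∀ j ∈ Finset.range (J+1),
      ∑ D ∈ (hfin y).toFinset.filter (fun D => Nat.log 2 (Nrm D).toNat = j),
        (Nrm D : ℝ) ^ (-α) ≤ (2 * C₁) * r ^ j := by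
    intro j _
    have hterm : ∀ D ∈ (hfin y).toFinset.filter (fun D => Nat.log 2 (Nrm D).toNat = j),
        (Nrm D : ℝ) ^ (-α) ≤ ((2:ℝ) ^ j) ^ (-α) := by
      intro D hD
      rw [Finset.mem_filter] at hD
      have hne : (Nrm D).toNat ≠ 0 := by
        have := hge D; omega
      have h2j : (2:ℕ) ^ j ≤ (Nrm D).toNat := by
        rw [← hD.2]; exact Nat.pow_log_le_self 2 hne
      have h2jr : (2:ℝ) ^ j ≤ (Nrm D : ℝ) := by
        have : ((2:ℕ) ^ j : ℝ) ≤ ((Nrm D).toNat : ℝ) := by exact_mod_cast h2j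
        rw [toNat_cast_real (by linarith [hge D] : (0:ℤ) ≤ Nrm D)] at this
        push_cast at this ⊢
        exact this
      exact Real.rpow_le_rpow_of_nonpos (by positivity) h2jr (by linarith)
    have hcard : (((hfin y).toFinset.filter
        (fun D => Nat.log 2 (Nrm D).toNat = j)).card : ℝ) ≤ C₁ * 2 ^ (j+1) := by
      have hsub : (hfin y).toFinset.filter (fun D => Nat.log 2 (Nrm D).toNat = j)
          ⊆ (hfin ((2:ℝ)^(j+1))).toFinset := by
        intro D hD
        rw [Finset.mem_filter] at hD
        rw [Set.Finite.mem_toFinset, Set.mem_setOf_eq]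
        have hlt : (Nrm D).toNat < 2 ^ (j+1) := by
          rw [← hD.2]; exact Nat.lt_pow_succ_log_self (by norm_num) _
        have : ((Nrm D).toNat : ℝ) < ((2:ℕ) ^ (j+1) : ℝ) := by exact_mod_cast hlt
        rw [toNat_cast_real (by linarith [hge D] : (0:ℤ) ≤ Nrm D)] at this
        push_cast at this ⊢
        linarith
      calc (((hfin y).toFinset.filter (fun D => Nat.log 2 (Nrm D).toNat = j)).card : ℝ)
          ≤ ((hfin ((2:ℝ)^(j+1))).toFinset.card : ℝ) := by
            exact_mod_cast Finset.card_le_card hsub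
      _ ≤ C₁ * 2 ^ (j+1) := hlin _ (by positivity)
    calc ∑ D ∈ (hfin y).toFinset.filter (fun D => Nat.log 2 (Nrm D).toNat = j),
          (Nrm D : ℝ) ^ (-α)
        ≤ ∑ _D ∈ (hfin y).toFinset.filter (fun D => Nat.log 2 (Nrm D).toNat = j),
          ((2:ℝ) ^ j) ^ (-α) := Finset.sum_le_sum hterm
    _ = (((hfin y).toFinset.filter (fun D => Nat.log 2 (Nrm D).toNat = j)).card : ℝ)
          * ((2:ℝ) ^ j) ^ (-α) := by rw [Finset.sum_const, nsmul_eq_mul]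
    _ ≤ (C₁ * 2 ^ (j+1)) * ((2:ℝ) ^ j) ^ (-α) := by
        apply mul_le_mul_of_nonneg_right hcard (Real.rpow_nonneg (by positivity) _)
    _ = (2 * C₁) * r ^ j := by
        have e1 : ((2:ℝ) ^ j) ^ (-α) = (2:ℝ) ^ ((j:ℝ) * (-α)) := by
          rw [← Real.rpow_natCast (2:ℝ) j, ← Real.rpow_mul (by norm_num)]
        have e2 : r ^ j = (2:ℝ) ^ ((1-α) * (j:ℝ)) := by
          rw [hr, ← Real.rpow_natCast ((2:ℝ)^(1-α)) j, ← Real.rpow_mul (by norm_num)]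
        have e3 : (2:ℝ) ^ (j+1) = 2 * (2:ℝ) ^ ((j:ℝ)) := by
          rw [pow_succ, ← Real.rpow_natCast (2:ℝ) j]; ring
        rw [e1, e2, e3]
        calc C₁ * (2 * (2:ℝ) ^ ((j:ℝ))) * (2:ℝ) ^ ((j:ℝ) * (-α))
            = 2 * C₁ * ((2:ℝ) ^ ((j:ℝ)) * (2:ℝ) ^ ((j:ℝ) * (-α))) := by ring
        _ = 2 * C₁ * (2:ℝ) ^ ((j:ℝ) + (j:ℝ) * (-α)) := by
            rw [← Real.rpow_add (by norm_num)]
        _ = 2 * C₁ * (2:ℝ) ^ ((1-α) * (j:ℝ)) := by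
            rw [show (j:ℝ) + (j:ℝ) * (-α) = (1-α) * (j:ℝ) by ring]
  calc ∑ j ∈ Finset.range (J+1), ∑ D ∈ (hfin y).toFinset.filter
        (fun D => Nat.log 2 (Nrm D).toNat = j), (Nrm D : ℝ) ^ (-α)
      ≤ ∑ j ∈ Finset.range (J+1), (2 * C₁) * r ^ j := Finset.sum_le_sum hfiber
  _ = (2 * C₁) * ∑ j ∈ Finset.range (J+1), r ^ j := by rw [Finset.mul_sum]
  _ = (2 * C₁) * ((r ^ (J+1) - 1) / (r - 1)) := by rw [geom_sum_eq (by linarith) (J+1)]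
  _ ≤ (2 * C₁) * (r ^ (J+1) / (r - 1)) := by
      apply mul_le_mul_of_nonneg_left _ (by positivity)
      exact (div_le_div_iff_of_pos_right hr0).2 (by linarith [pow_pos (by linarith : (0:ℝ) < r) (J+1)])
  _ ≤ (4 * C₁ / (2 ^ (1-α) - 1)) * y ^ (1-α) := by
      have hfloor : (1:ℕ) ≤ ⌊y⌋₊ := Nat.one_le_iff_ne_zero.2 (by
        have : 0 < ⌊y⌋₊ := Nat.floor_pos.mpr hy
        omega)
      have h2J : (2:ℝ) ^ (J+1) ≤ 2 * y := by
        have hn : (2:ℕ) ^ J ≤ ⌊y⌋₊ := by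
          rw [hJ]; exact Nat.pow_log_le_self 2 (by omega)
        have h1 : ((2:ℕ) ^ J : ℝ) ≤ (⌊y⌋₊ : ℝ) := by exact_mod_cast hn
        have h2 : ((⌊y⌋₊ : ℝ)) ≤ y := Nat.floor_le (by linarith)
        have h3 : (2:ℝ) ^ J ≤ y := by push_cast at h1; linarith
        rw [pow_succ]; linarith [pow_nonneg (by norm_num : (0:ℝ) ≤ 2) J]
      have hkey : r ^ (J+1) ≤ 2 * y ^ (1-α) := by
        have e2 : r ^ (J+1) = ((2:ℝ) ^ (J+1)) ^ (1-α) := by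
          rw [hr, ← Real.rpow_natCast ((2:ℝ)^(1-α)) (J+1),
            ← Real.rpow_mul (by norm_num), ← Real.rpow_natCast (2:ℝ) (J+1),
            ← Real.rpow_mul (by norm_num), mul_comm (1-α)]
        rw [e2]
        calc ((2:ℝ) ^ (J+1)) ^ (1-α) ≤ (2 * y) ^ (1-α) :=
            Real.rpow_le_rpow (by positivity) h2J (by linarith)
        _ = (2:ℝ) ^ (1-α) * y ^ (1-α) := Real.mul_rpow (by norm_num) (by linarith)
        _ ≤ 2 * y ^ (1-α) := by
            apply mul_le_mul_of_nonneg_right _ (Real.rpow_nonneg (by linarith) _)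
            calc (2:ℝ) ^ (1-α) ≤ (2:ℝ) ^ (1:ℝ) :=
              Real.rpow_le_rpow_of_exponent_le one_le_two (by linarith)
            _ = 2 := Real.rpow_one 2
      calc (2 * C₁) * (r ^ (J+1) / (r - 1))
          ≤ (2 * C₁) * ((2 * y ^ (1-α)) / (r - 1)) :=
            mul_le_mul_of_nonneg_left ((div_le_div_iff_of_pos_right hr0).2 hkey) (by positivity)
        _ = (4 * C₁ / (2 ^ (1-α) - 1)) * y ^ (1-α) := by rw [← hr]; field_simp; ring


lemma mob_sum_ite {X : Type*} [DecidableEq X] (K : X →₀ ℕ) :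
    ∑ D ∈ Finset.Iic K, mob (K - D) = if K = 0 then 1 else 0 := by
  rw [sum_Iic_reflect]
  by_cases hK : K = 0
  · subst hK
    rw [if_pos rfl]
    rw [show (Finset.Iic (0 : X →₀ ℕ)) = {0} by ext E; simp [Finset.mem_Iic, le_zero_iff]]
    simp [mob_zero]
  · rw [if_neg hK, sum_mob_Iic hK]

lemma main_est {X : Type*} [DecidableEq X] {Nrm : (X →₀ ℕ) → ℤ}
    (hge : ∀ A, 1 ≤ Nrm A) (h0 : Nrm 0 = 1)
    (hmul : ∀ A B, Nrm (A + B) = Nrm A * Nrm B)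
    {c α : ℝ} (hc : 0 < c) (hα0 : 0 ≤ α) (hα1 : α < 1)
    (hfin : ∀ x : ℝ, {A : X →₀ ℕ | (Nrm A : ℝ) ≤ x}.Finite)
    {C C₁ : ℝ} (hC0 : 0 < C) (hC₁0 : 0 < C₁)
    (herr : ∀ t : ℝ, 0 < t →
      |((hfin t).toFinset.card : ℝ) - c * t| ≤ C * t ^ α)
    (hlin : ∀ t : ℝ, 0 < t → ((hfin t).toFinset.card : ℝ) ≤ C₁ * t)
    {x yv : ℝ} (hx : 0 < x) (hyv : 1 ≤ yv) :
    |((∑ K ∈ (hfin yv).toFinset, ∑ M ∈ (hfin x).toFinset, ram Nrm K M : ℤ) : ℝ) - c * x|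
      ≤ (C * (C₁ * (4 * C₁ / (2 ^ (1-α) - 1)))) * (x ^ α * yv ^ (2-α)) := by
  set Sy := (hfin yv).toFinset with hSy
  set C₂ : ℝ := 4 * C₁ / (2 ^ (1-α) - 1) with hC₂
  have hr1 : (1:ℝ) < 2 ^ (1-α) := by
    rw [show (1:ℝ) = (2:ℝ) ^ (0:ℝ) by rw [Real.rpow_zero]]
    exact Real.rpow_lt_rpow_of_exponent_lt (by norm_num) (by linarith)
  have hC₂0 : 0 < C₂ := by rw [hC₂]; apply div_pos (by positivity); linarith
  have hNpos : ∀ D : X →₀ ℕ, (0:ℝ) < (Nrm D : ℝ) := Nrm_real_pos hge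
  -- cast to real sums
  have cast1 : ((∑ K ∈ Sy, ∑ M ∈ (hfin x).toFinset, ram Nrm K M : ℤ) : ℝ)
      = ∑ K ∈ Sy, ∑ M ∈ (hfin x).toFinset, ∑ D ∈ Finset.Iic (M ⊓ K),
          (Nrm D : ℝ) * (mob (K - D) : ℝ) := by
    simp only [ram]
    push_cast
    rfl
  -- inner swap and decomposition for each K
  have perK : ∀ K, ∑ M ∈ (hfin x).toFinset, ∑ D ∈ Finset.Iic (M ⊓ K),
        (Nrm D : ℝ) * (mob (K - D) : ℝ)
      = (if K = 0 then c * x else 0)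
        + ∑ D ∈ Finset.Iic K, ((Nrm D : ℝ) * (mob (K - D) : ℝ))
            * (((hfin (x / Nrm D)).toFinset.card : ℝ) - c * (x / Nrm D)) := by
    intro K
    rw [swap_inner hge hmul hfin K x (fun D => (Nrm D : ℝ) * (mob (K - D) : ℝ))]
    have expand : ∀ D ∈ Finset.Iic K,
        ((Nrm D : ℝ) * (mob (K - D) : ℝ)) * ((hfin (x / Nrm D)).toFinset.card : ℝ)
        = c * x * (mob (K - D) : ℝ)
          + ((Nrm D : ℝ) * (mob (K - D) : ℝ))
            * (((hfin (x / Nrm D)).toFinset.card : ℝ) - c * (x / Nrm D)) := by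
      intro D _
      have h1 : (Nrm D : ℝ) ≠ 0 := (hNpos D).ne'
      field_simp
      ring
    rw [Finset.sum_congr rfl expand, Finset.sum_add_distrib]
    congr 1
    rw [← Finset.mul_sum]
    have : ∑ D ∈ Finset.Iic K, (mob (K - D) : ℝ)
        = ((∑ D ∈ Finset.Iic K, mob (K - D) : ℤ) : ℝ) := by push_cast; rfl
    rw [this, mob_sum_ite]
    by_cases hK : K = 0 <;> simp [hK]
  rw [cast1, Finset.sum_congr rfl (fun K _ => perK K), Finset.sum_add_distrib]
  have main_term : ∑ K ∈ Sy, (if K = 0 then c * x else 0) = c * x := by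
    rw [Finset.sum_ite_eq' Sy 0 (fun _ => c * x), if_pos]
    rw [hSy, Set.Finite.mem_toFinset, Set.mem_setOf_eq, h0]
    exact_mod_cast hyv
  rw [main_term, add_sub_cancel_left]
  -- bound the error double sum
  have term_bound : ∀ K ∈ Sy, ∀ D ∈ Finset.Iic K,
      |((Nrm D : ℝ) * (mob (K - D) : ℝ))
          * (((hfin (x / Nrm D)).toFinset.card : ℝ) - c * (x / Nrm D))|
        ≤ C * x ^ α * (Nrm D : ℝ) ^ (1 - α) := by
    intro K _ D _
    have hND := hNpos D
    have hdiv : 0 < x / (Nrm D : ℝ) := div_pos hx hND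
    have hErr := herr _ hdiv
    have hmob : |(mob (K - D) : ℝ)| ≤ 1 := by exact_mod_cast mob_abs (K - D)
    calc |((Nrm D : ℝ) * (mob (K - D) : ℝ))
          * (((hfin (x / Nrm D)).toFinset.card : ℝ) - c * (x / Nrm D))|
        = (Nrm D : ℝ) * |(mob (K - D) : ℝ)|
          * |(((hfin (x / Nrm D)).toFinset.card : ℝ) - c * (x / Nrm D))| := by
          rw [abs_mul, abs_mul, abs_of_pos hND]
    _ ≤ (Nrm D : ℝ) * 1 * (C * (x / Nrm D) ^ α) := by
          apply mul_le_mul _ hErr (abs_nonneg _) (by positivity)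
          exact mul_le_mul_of_nonneg_left hmob hND.le
    _ = C * x ^ α * (Nrm D : ℝ) ^ (1 - α) := by
          rw [Real.div_rpow hx.le hND.le, Real.rpow_sub hND, Real.rpow_one]
          field_simp
  have sum_bound : |∑ K ∈ Sy, ∑ D ∈ Finset.Iic K,
      ((Nrm D : ℝ) * (mob (K - D) : ℝ))
          * (((hfin (x / Nrm D)).toFinset.card : ℝ) - c * (x / Nrm D))|
      ≤ C * x ^ α * ∑ K ∈ Sy, ∑ D ∈ Finset.Iic K, (Nrm D : ℝ) ^ (1 - α) := by
    calc |∑ K ∈ Sy, ∑ D ∈ Finset.Iic K, _| ≤ ∑ K ∈ Sy, |∑ D ∈ Finset.Iic K,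
        ((Nrm D : ℝ) * (mob (K - D) : ℝ))
          * (((hfin (x / Nrm D)).toFinset.card : ℝ) - c * (x / Nrm D))| :=
        Finset.abs_sum_le_sum_abs _ _
    _ ≤ ∑ K ∈ Sy, ∑ D ∈ Finset.Iic K, |((Nrm D : ℝ) * (mob (K - D) : ℝ))
          * (((hfin (x / Nrm D)).toFinset.card : ℝ) - c * (x / Nrm D))| :=
        Finset.sum_le_sum fun K _ => Finset.abs_sum_le_sum_abs _ _
    _ ≤ ∑ K ∈ Sy, ∑ D ∈ Finset.Iic K, C * x ^ α * (Nrm D : ℝ) ^ (1 - α) :=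
        Finset.sum_le_sum fun K hK => Finset.sum_le_sum (term_bound K hK)
    _ = C * x ^ α * ∑ K ∈ Sy, ∑ D ∈ Finset.Iic K, (Nrm D : ℝ) ^ (1 - α) := by
        rw [Finset.mul_sum]
        exact Finset.sum_congr rfl fun K _ => by rw [Finset.mul_sum]
  have T_bound : ∑ K ∈ Sy, ∑ D ∈ Finset.Iic K, (Nrm D : ℝ) ^ (1 - α)
      ≤ C₁ * C₂ * yv ^ (2-α) := by
    rw [hSy, swap_outer hge hmul hfin yv (fun D => (Nrm D : ℝ) ^ (1 - α))]
    have step : ∀ D ∈ (hfin yv).toFinset,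
        (Nrm D : ℝ) ^ (1 - α) * ((hfin (yv / Nrm D)).toFinset.card : ℝ)
          ≤ C₁ * yv * (Nrm D : ℝ) ^ (-α) := by
      intro D _
      have hND := hNpos D
      have hdiv : 0 < yv / (Nrm D : ℝ) := div_pos (by linarith) hND
      calc (Nrm D : ℝ) ^ (1 - α) * ((hfin (yv / Nrm D)).toFinset.card : ℝ)
          ≤ (Nrm D : ℝ) ^ (1 - α) * (C₁ * (yv / Nrm D)) :=
            mul_le_mul_of_nonneg_left (hlin _ hdiv) (Real.rpow_nonneg hND.le _)
      _ = C₁ * yv * ((Nrm D : ℝ) ^ (1 - α) / (Nrm D : ℝ)) := by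
          field_simp
      _ = C₁ * yv * (Nrm D : ℝ) ^ (-α) := by
          have e : (Nrm D : ℝ) ^ (1 - α) / (Nrm D : ℝ) = (Nrm D : ℝ) ^ (-α) := by
            rw [show (1 - α) = -α + 1 by ring, Real.rpow_add hND, Real.rpow_one,
              mul_div_assoc, div_self hND.ne', mul_one]
          rw [e]
    calc ∑ D ∈ (hfin yv).toFinset,
        (Nrm D : ℝ) ^ (1 - α) * ((hfin (yv / Nrm D)).toFinset.card : ℝ)
        ≤ ∑ D ∈ (hfin yv).toFinset, C₁ * yv * (Nrm D : ℝ) ^ (-α) :=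
          Finset.sum_le_sum step
    _ = C₁ * yv * ∑ D ∈ (hfin yv).toFinset, (Nrm D : ℝ) ^ (-α) := by
        rw [Finset.mul_sum]
    _ ≤ C₁ * yv * (C₂ * yv ^ (1-α)) := by
        apply mul_le_mul_of_nonneg_left _ (by positivity)
        exact dyadic_bound hge hfin hα0 hα1 hC₁0 hlin hyv
    _ = C₁ * C₂ * yv ^ (2-α) := by
        rw [show (2-α : ℝ) = 1 + (1-α) by ring, Real.rpow_add (by linarith) 1 (1-α),
          Real.rpow_one]
        ring
  calc |∑ K ∈ Sy, ∑ D ∈ Finset.Iic K,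
      ((Nrm D : ℝ) * (mob (K - D) : ℝ))
          * (((hfin (x / Nrm D)).toFinset.card : ℝ) - c * (x / Nrm D))|
      ≤ C * x ^ α * ∑ K ∈ Sy, ∑ D ∈ Finset.Iic K, (Nrm D : ℝ) ^ (1 - α) := sum_bound
  _ ≤ C * x ^ α * (C₁ * C₂ * yv ^ (2-α)) :=
      mul_le_mul_of_nonneg_left T_bound (by positivity)
  _ = (C * (C₁ * C₂)) * (x ^ α * yv ^ (2-α)) := by ring
/-- Let `S(x, y) = ∑_{N(M) ≤ x, N(K) ≤ y} C_K(M)`. If `λ > (2 − α)/(1 − α)` and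
`y(x)^λ ≪ x`, then `S(x, y(x)) = c·x + o(x)` as `x → ∞`. -/
theorem double_sum_ram_asymptotic {X : Type*} [Nonempty X] [Countable X] [DecidableEq X]
    (Nrm : (X →₀ ℕ) → ℤ)
    (hge : ∀ A, 1 ≤ Nrm A) (h0 : Nrm 0 = 1) (hgt : ∀ A, A ≠ 0 → 1 < Nrm A)
    (hmul : ∀ A B, Nrm (A + B) = Nrm A * Nrm B)
    (c α : ℝ) (hc : 0 < c) (hα0 : 0 ≤ α) (hα1 : α < 1)
    (hfin : ∀ x : ℝ, {A : X →₀ ℕ | (Nrm A : ℝ) ≤ x}.Finite)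
    (hcount : (fun x : ℝ => (((hfin x).toFinset.card : ℝ) - c * x))
      =O[atTop] fun x : ℝ => x ^ α)
    (l : ℝ) (hl : (2 - α) / (1 - α) < l)
    (y : ℝ → ℝ) (hy : ∀ᶠ x in atTop, 1 ≤ y x)
    (hyx : (fun x : ℝ => y x ^ l) =O[atTop] fun x : ℝ => x) :
    (fun x : ℝ =>
        ((∑ K ∈ (hfin (y x)).toFinset, ∑ M ∈ (hfin x).toFinset, ram Nrm K M : ℤ) : ℝ)
          - c * x)
      =o[atTop] fun x : ℝ => x := by
 
  obtain ⟨C, hC0, herr⟩ := err_bound hge hfin hc hα0 hα1 hcount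
  have hC₁0 : (0:ℝ) < c + C := by linarith
  have hlin := lin_bound hge hfin hc hα0 hα1 hC0 herr
  have hl0 : 0 < l := by
    have h2α : (0:ℝ) < 2 - α := by linarith
    have h1α : (0:ℝ) < 1 - α := by linarith
    exact lt_trans (div_pos h2α h1α) hl
  have h1 : (fun x : ℝ =>
        ((∑ K ∈ (hfin (y x)).toFinset, ∑ M ∈ (hfin x).toFinset, ram Nrm K M : ℤ) : ℝ)
          - c * x)
      =O[atTop] fun x => x ^ α * y x ^ (2-α) := by
    apply IsBigO.of_bound (C * ((c + C) * (4 * (c + C) / (2 ^ (1-α) - 1))))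
    filter_upwards [hy, eventually_gt_atTop (0:ℝ)] with x hy1 hx0
    rw [Real.norm_eq_abs, Real.norm_eq_abs]
    have hb := main_est hge h0 hmul hc hα0 hα1 hfin hC0 hC₁0 herr hlin hx0 hy1
    have hK₀ : (0:ℝ) ≤ C * ((c + C) * (4 * (c + C) / (2 ^ (1-α) - 1))) := by
      have hr1 : (1:ℝ) < 2 ^ (1-α) := by
        rw [show (1:ℝ) = (2:ℝ) ^ (0:ℝ) by rw [Real.rpow_zero]]
        exact Real.rpow_lt_rpow_of_exponent_lt (by norm_num) (by linarith)
      have : (0:ℝ) ≤ 4 * (c + C) / (2 ^ (1-α) - 1) := by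
        apply le_of_lt; apply div_pos (by positivity); linarith
      positivity
    calc |((∑ K ∈ (hfin (y x)).toFinset, ∑ M ∈ (hfin x).toFinset, ram Nrm K M : ℤ) : ℝ)
          - c * x| ≤ (C * ((c + C) * (4 * (c + C) / (2 ^ (1-α) - 1))))
            * (x ^ α * y x ^ (2-α)) := hb
    _ ≤ (C * ((c + C) * (4 * (c + C) / (2 ^ (1-α) - 1)))) * |x ^ α * y x ^ (2-α)| :=
        mul_le_mul_of_nonneg_left (le_abs_self _) hK₀
  have hγ1 : α + (2-α)/l < 1 := by
    have h1α : (0:ℝ) < 1 - α := by linarith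
    have h2 : 2 - α < l * (1 - α) := by
      have := (div_lt_iff₀ h1α).1 hl
      linarith
    have h3 : (2-α)/l < 1 - α := by
      rw [div_lt_iff₀ hl0]
      linarith
    linarith
  have h2 : (fun x : ℝ => x ^ α * y x ^ (2-α)) =O[atTop]
      fun x : ℝ => x ^ (α + (2-α)/l) := by
    obtain ⟨Cy, hCy⟩ := hyx.bound
    apply IsBigO.of_bound ((max Cy 1) ^ ((2-α)/l))
    filter_upwards [hy, hCy, eventually_ge_atTop (1:ℝ)] with x hy1 hb hx1
    have hx0 : (0:ℝ) < x := by linarith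
    have hyl : y x ^ l ≤ max Cy 1 * x := by
      rw [Real.norm_eq_abs, Real.norm_eq_abs,
        abs_of_pos (Real.rpow_pos_of_pos (by linarith) l), abs_of_pos hx0] at hb
      calc y x ^ l ≤ Cy * x := hb
      _ ≤ max Cy 1 * x := mul_le_mul_of_nonneg_right (le_max_left _ _) hx0.le
    have hyle : y x ≤ (max Cy 1 * x) ^ (1/l) := by
      have hmono := Real.rpow_le_rpow (Real.rpow_nonneg (by linarith : (0:ℝ) ≤ y x) l)
        hyl (by positivity : (0:ℝ) ≤ 1/l)
      rwa [← Real.rpow_mul (by linarith : (0:ℝ) ≤ y x), mul_one_div,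
        div_self hl0.ne', Real.rpow_one] at hmono
    have h5 : y x ^ (2-α) ≤ (max Cy 1 * x) ^ ((2-α)/l) := by
      calc y x ^ (2-α) ≤ ((max Cy 1 * x) ^ (1/l)) ^ (2-α) :=
          Real.rpow_le_rpow (by linarith) hyle (by linarith)
      _ = (max Cy 1 * x) ^ ((2-α)/l) := by
          rw [← Real.rpow_mul (by positivity), show (1/l)*(2-α) = (2-α)/l by ring]
    have h6 : (max Cy 1 * x) ^ ((2-α)/l)
        = (max Cy 1) ^ ((2-α)/l) * x ^ ((2-α)/l) :=
      Real.mul_rpow (by positivity) hx0.le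
    have hfinal : x ^ α * y x ^ (2-α)
        ≤ (max Cy 1) ^ ((2-α)/l) * x ^ (α + (2-α)/l) := by
      calc x ^ α * y x ^ (2-α)
          ≤ x ^ α * ((max Cy 1) ^ ((2-α)/l) * x ^ ((2-α)/l)) := by
            rw [← h6]
            exact mul_le_mul_of_nonneg_left h5 (Real.rpow_nonneg hx0.le α)
      _ = (max Cy 1) ^ ((2-α)/l) * (x ^ α * x ^ ((2-α)/l)) := by ring
      _ = (max Cy 1) ^ ((2-α)/l) * x ^ (α + (2-α)/l) := by
          rw [← Real.rpow_add hx0]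
    rw [Real.norm_eq_abs, Real.norm_eq_abs,
      abs_of_nonneg (by positivity : (0:ℝ) ≤ x ^ α * y x ^ (2-α)),
      abs_of_nonneg (Real.rpow_nonneg hx0.le _)]
    exact hfinal
  have h3 : (fun x : ℝ => x ^ (α + (2-α)/l)) =o[atTop] fun x : ℝ => x := by
    rw [isLittleO_iff_tendsto' (by
      filter_upwards [eventually_gt_atTop (0:ℝ)] with x hx h
      exact absurd h hx.ne')]
    have htd : Tendsto (fun x : ℝ => x ^ ((α + (2-α)/l) - 1)) atTop (𝓝 0) := by
      have := tendsto_rpow_neg_atTop (by linarith : (0:ℝ) < 1 - (α + (2-α)/l))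
      simpa [neg_sub] using this
    apply htd.congr'
    filter_upwards [eventually_gt_atTop (0:ℝ)] with x hx
    rw [Real.rpow_sub hx, Real.rpow_one]
  exact h1.trans_isLittleO (h2.trans_isLittleO h3)
end

section
/- Suppose X is at most countable and [x] = c·x + O(x^α) for some constant c > 0 and some α ∈ [0, 1). Then the series Z(σ) = Σ_{A ∈ I_X} N(A)^{−σ} converges for every real σ > 1, and (σ − 1)·Z(σ) → c as σ → 1⁺. -/
open Finset Filter Topology Asymptotics
open scoped Classical

lemma rpow_neg_anti' {σ : ℝ} (hσ : 0 < σ) {x y : ℝ} (hx : 0 < x) (hxy : x ≤ y) :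
    y ^ (-σ) ≤ x ^ (-σ) := by
  rw [Real.rpow_neg hx.le, Real.rpow_neg (hx.trans_le hxy).le]
  exact inv_anti₀ (Real.rpow_pos_of_pos hx σ)
    (Real.rpow_le_rpow hx.le hxy hσ.le)

lemma diff_rpow_le' {σ : ℝ} (hσ : 0 < σ) {x : ℝ} (hx : 1 ≤ x) :
    x ^ (-σ) - (x + 1) ^ (-σ) ≤ σ * x ^ (-σ - 1) := by
  have hx0 : (0:ℝ) < x := lt_of_lt_of_le one_pos hx
  have hlt : x < x + 1 := by linarith
  have hderiv : ∀ t ∈ Set.Ioo x (x+1),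
      HasDerivAt (fun t : ℝ => t ^ (-σ)) ((-σ) * t ^ (-σ - 1)) t := by
    intro t ht
    exact Real.hasDerivAt_rpow_const (Or.inl (by nlinarith [ht.1] : t ≠ 0))
  have hcont : ContinuousOn (fun t : ℝ => t ^ (-σ)) (Set.Icc x (x+1)) := by
    intro t ht
    exact (Real.continuousAt_rpow_const t (-σ)
      (Or.inl (by nlinarith [ht.1] : t ≠ 0))).continuousWithinAt
  obtain ⟨ξ, hξ, heq⟩ := exists_hasDerivAt_eq_slope (fun t : ℝ => t ^ (-σ))
    (fun t => (-σ) * t ^ (-σ - 1)) hlt hcont hderiv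
  have hξx : x ≤ ξ := hξ.1.le
  have : x ^ (-σ) - (x+1) ^ (-σ) = σ * ξ ^ (-σ - 1) := by
    have h2 : (x + 1) - x = 1 := by ring
    rw [h2, div_one] at heq
    nlinarith [heq]
  rw [this]
  have : ξ ^ (-σ - 1) ≤ x ^ (-σ - 1) := by
    have h := rpow_neg_anti' (by linarith : (0:ℝ) < σ + 1) hx0 hξx
    have e : -(σ+1) = -σ - 1 := by ring
    rwa [e] at h
  nlinarith

lemma abel_aux' (B g : ℕ → ℝ) (M : ℕ) :
    ∑ n ∈ Finset.range M, (B (n+1) - B n) * g (n+1)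
      = B M * g M - B 0 * g 0 - ∑ n ∈ Finset.range M, B n * (g (n+1) - g n) := by
  have h : ∀ n ∈ Finset.range M, (B (n+1) - B n) * g (n+1)
      = (B (n+1) * g (n+1) - B n * g n) - B n * (g (n+1) - g n) := by
    intro n _; ring
  rw [Finset.sum_congr rfl h, Finset.sum_sub_distrib,
    Finset.sum_range_sub (fun n => B n * g n)]


set_option maxHeartbeats 1000000 in
/-- If `#{A : N(A) ≤ x} = c·x + O(x^α)` with `c > 0` and `0 ≤ α < 1`, then the series
`Z(σ) = ∑_A N(A)^{−σ}` converges for every real `σ > 1`, and `(σ − 1)·Z(σ) → c`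
as `σ → 1⁺`. -/
theorem zeta_summable_and_residue {X : Type*} [Nonempty X] [Countable X] [DecidableEq X]
    (Nrm : (X →₀ ℕ) → ℤ)
    (hge : ∀ A, 1 ≤ Nrm A) (h0 : Nrm 0 = 1) (hgt : ∀ A, A ≠ 0 → 1 < Nrm A)
    (hmul : ∀ A B, Nrm (A + B) = Nrm A * Nrm B)
    (c α : ℝ) (hc : 0 < c) (hα0 : 0 ≤ α) (hα1 : α < 1)
    (hfin : ∀ x : ℝ, {A : X →₀ ℕ | (Nrm A : ℝ) ≤ x}.Finite)
    (hcount : (fun x : ℝ => (((hfin x).toFinset.card : ℝ) - c * x))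
      =O[atTop] fun x : ℝ => x ^ α) :
    (∀ σ : ℝ, 1 < σ → Summable fun A : X →₀ ℕ => (Nrm A : ℝ) ^ (-σ)) ∧
      Tendsto (fun σ : ℝ => (σ - 1) * ∑' A : X →₀ ℕ, (Nrm A : ℝ) ^ (-σ))
        (𝓝[>] 1) (𝓝 c) := by
  classical
  -- basic facts about the norm
  have hge' : ∀ A, (1:ℝ) ≤ (Nrm A : ℝ) := fun A => by exact_mod_cast hge A
  set e : (X →₀ ℕ) → ℕ := fun A => (Nrm A).toNat with he
  have hNe : ∀ A, ((Nrm A : ℝ)) = (e A : ℝ) := by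
    intro A
    have h := Int.toNat_of_nonneg (le_trans zero_le_one (hge A))
    exact_mod_cast h.symm
  have he1 : ∀ A, 1 ≤ e A := by
    intro A
    have : (1:ℝ) ≤ (e A : ℝ) := (hNe A) ▸ hge' A
    exact_mod_cast this
  -- fibers
  have hfib : ∀ k : ℕ, {A : X →₀ ℕ | e A = k}.Finite := by
    intro k
    refine (hfin k).subset ?_
    intro A hA
    simp only [Set.mem_setOf_eq] at hA ⊢
    rw [hNe A, hA]
  set a : ℕ → ℕ := fun k => (hfib k).toFinset.card with ha
  set big : ℕ → Finset (X →₀ ℕ) := fun n => (hfin (n:ℝ)).toFinset with hbig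
  have hmem_big : ∀ (n : ℕ) (A), A ∈ big n ↔ (Nrm A : ℝ) ≤ n := by
    intro n A; simp [hbig]
  have hmaps : ∀ n : ℕ, ∀ A ∈ big n, e A ∈ Finset.range (n+1) := by
    intro n A hA
    rw [hmem_big] at hA
    rw [Finset.mem_range, Nat.lt_succ_iff]
    exact_mod_cast (hNe A) ▸ hA
  have hfilter : ∀ (n k : ℕ), k ∈ Finset.range (n+1) →
      (big n).filter (fun A => e A = k) = (hfib k).toFinset := by
    intro n k hk
    rw [Finset.mem_range, Nat.lt_succ_iff] at hk
    ext A
    simp only [Finset.mem_filter, Set.Finite.mem_toFinset, Set.mem_setOf_eq, hmem_big]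
    constructor
    · rintro ⟨_, h⟩; exact h
    · intro h
      refine ⟨?_, h⟩
      rw [hNe A, h]
      exact_mod_cast hk
  -- the counting function
  set piR : ℕ → ℝ := fun n => ((big n).card : ℝ) with hpiR
  have hcountid : ∀ n : ℕ, ∑ k ∈ Finset.range (n+1), (a k : ℝ) = piR n := by
    intro n
    have hcn := Finset.card_eq_sum_card_fiberwise (hmaps n)
    show _ = ((big n).card : ℝ)
    rw [hcn]
    push_cast
    refine Finset.sum_congr rfl ?_
    intro k hk
    rw [hfilter n k hk]
  have hsum_big : ∀ (σ : ℝ) (n : ℕ), ∑ A ∈ big n, (Nrm A : ℝ) ^ (-σ)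
      = ∑ k ∈ Finset.range (n+1), (a k : ℝ) * (k:ℝ) ^ (-σ) := by
    intro σ n
    rw [← Finset.sum_fiberwise_of_maps_to (hmaps n) (fun A => (Nrm A : ℝ) ^ (-σ))]
    refine Finset.sum_congr rfl ?_
    intro k hk
    rw [hfilter n k hk]
    rw [Finset.sum_congr rfl (fun A hA => ?_), Finset.sum_const, nsmul_eq_mul, ha]
    have hA' : e A = k := by simpa using hA
    rw [hNe A, hA']
  have ha0 : a 0 = 0 := by
    rw [ha]
    simp only [Finset.card_eq_zero]
    rw [Finset.eq_empty_iff_forall_notMem]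
    intro A hA
    simp only [Set.Finite.mem_toFinset, Set.mem_setOf_eq] at hA
    exact absurd hA (by have := he1 A; omega)
  have hpi0 : piR 0 = 0 := by
    rw [← hcountid 0]
    simp [ha0]
  -- the big-O constant
  obtain ⟨C, hC⟩ := hcount.isBigOWith
  obtain ⟨x₀, hx₀⟩ := Filter.eventually_atTop.mp hC.bound
  set n₀ : ℕ := max 1 ⌈x₀⌉₊ with hn₀
  set K : ℝ := (max C 0) + ∑ k ∈ Finset.range (n₀+1), |piR k - c * k| with hKdef
  have hK0 : 0 ≤ K := by
    apply add_nonneg (le_max_right _ _)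
    exact Finset.sum_nonneg fun k _ => abs_nonneg _
  have hK : ∀ n : ℕ, 1 ≤ n → |piR n - c * n| ≤ K * (n:ℝ) ^ α := by
    intro n hn
    have hn1 : (1:ℝ) ≤ (n:ℝ) := by exact_mod_cast hn
    have hpow1 : (1:ℝ) ≤ (n:ℝ) ^ α := Real.one_le_rpow hn1 hα0
    by_cases hcase : n₀ ≤ n
    · have hx : x₀ ≤ (n:ℝ) := by
        calc x₀ ≤ (⌈x₀⌉₊ : ℝ) := Nat.le_ceil x₀
        _ ≤ (n₀ : ℝ) := by exact_mod_cast Nat.cast_le.mpr (le_max_right _ _)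
        _ ≤ (n:ℝ) := by exact_mod_cast hcase
      have := hx₀ (n:ℝ) hx
      rw [Real.norm_eq_abs, Real.norm_eq_abs] at this
      have hpos : |(n:ℝ) ^ α| = (n:ℝ) ^ α := abs_of_nonneg (Real.rpow_nonneg (by positivity) α)
      rw [hpos] at this
      calc |piR n - c * n| = |((hfin (n:ℝ)).toFinset.card : ℝ) - c * (n:ℝ)| := rfl
        _ ≤ C * (n:ℝ) ^ α := this
        _ ≤ K * (n:ℝ) ^ α := by
            apply mul_le_mul_of_nonneg_right _ (Real.rpow_nonneg (by positivity) α)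
            rw [hKdef]
            have : C ≤ max C 0 := le_max_left _ _
            have h2 : (0:ℝ) ≤ ∑ k ∈ Finset.range (n₀+1), |piR k - c * k| :=
              Finset.sum_nonneg fun k _ => abs_nonneg _
            linarith
    · push_neg at hcase
      have hmem : n ∈ Finset.range (n₀+1) := Finset.mem_range.mpr (by omega)
      have h1 : |piR n - c * n| ≤ ∑ k ∈ Finset.range (n₀+1), |piR k - c * k| :=
        Finset.single_le_sum (f := fun k => |piR k - c * (k:ℝ)|) (fun k _ => abs_nonneg _) hmem
      calc |piR n - c * n| ≤ K := by
            rw [hKdef]; have : (0:ℝ) ≤ max C 0 := le_max_right _ _; linarith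
        _ = K * 1 := (mul_one K).symm
        _ ≤ K * (n:ℝ) ^ α := mul_le_mul_of_nonneg_left hpow1 hK0
  -- B and its step
  set B : ℕ → ℝ := fun n => piR n - c * n with hB
  have hB0 : B 0 = 0 := by simp [hB, hpi0]
  have hBstep : ∀ n : ℕ, B (n+1) - B n = (a (n+1) : ℝ) - c := by
    intro n
    have h1 := hcountid (n+1)
    have h2 := hcountid n
    rw [Finset.sum_range_succ] at h1
    rw [hB]
    push_cast
    push_cast at h1 h2
    linarith
  have hBbound : ∀ n : ℕ, |B n| ≤ K * (n:ℝ) ^ α := by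
    intro n
    rcases Nat.eq_zero_or_pos n with h | h
    · subst h
      rw [hB0, abs_zero]
      exact mul_nonneg hK0 (Real.rpow_nonneg (by norm_num) α)
    · exact hK n h
  -- the convergent comparison series S
  have hSsum : Summable (fun n : ℕ => (n:ℝ) ^ (α - 2)) :=
    Real.summable_nat_rpow.mpr (by linarith)
  set S : ℝ := ∑' n : ℕ, (n:ℝ) ^ (α - 2) with hS
  have hS0 : 0 ≤ S := tsum_nonneg fun n => Real.rpow_nonneg (by positivity) _
  have hSpartial : ∀ M : ℕ, ∑ n ∈ Finset.range M, (n:ℝ) ^ (α - 2) ≤ S :=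
    fun M => Summable.sum_le_tsum _ (fun n _ => Real.rpow_nonneg (by positivity) _) hSsum
  -- THE KEY ESTIMATE
  have key : ∀ σ : ℝ, 1 < σ → ∀ M : ℕ,
      |∑ n ∈ Finset.range M, ((a (n+1) : ℝ) - c) * ((n:ℝ)+1) ^ (-σ)| ≤ K + K * σ * S := by
    intro σ hσ M
    set g : ℕ → ℝ := fun n => (n:ℝ) ^ (-σ) with hg
    have hgdef : ∀ n : ℕ, ((n:ℝ)+1) ^ (-σ) = g (n+1) := by
      intro n; rw [hg]; push_cast; ring_nf
    have hrw : ∑ n ∈ Finset.range M, ((a (n+1) : ℝ) - c) * ((n:ℝ)+1) ^ (-σ)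
        = ∑ n ∈ Finset.range M, (B (n+1) - B n) * g (n+1) := by
      refine Finset.sum_congr rfl fun n _ => ?_
      rw [hBstep n, hgdef n]
    rw [hrw, abel_aux' B g M, hB0, zero_mul, sub_zero]
    have hterm1 : |B M * g M| ≤ K := by
      rcases Nat.eq_zero_or_pos M with h | h
      · subst h
        rw [hB0, zero_mul, abs_zero]
        exact hK0
      · have hM1 : (1:ℝ) ≤ (M:ℝ) := by exact_mod_cast h
        rw [abs_mul]
        have hgM : |g M| = (M:ℝ) ^ (-σ) := abs_of_nonneg (Real.rpow_nonneg (by positivity) _)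
        rw [hgM]
        calc |B M| * (M:ℝ) ^ (-σ) ≤ (K * (M:ℝ) ^ α) * (M:ℝ) ^ (-σ) :=
              mul_le_mul_of_nonneg_right (hBbound M) (Real.rpow_nonneg (by positivity) _)
          _ = K * (M:ℝ) ^ (α - σ) := by
              rw [mul_assoc, ← Real.rpow_add (by positivity : (0:ℝ) < (M:ℝ))]
              ring_nf
          _ ≤ K * 1 := by
              apply mul_le_mul_of_nonneg_left _ hK0
              exact Real.rpow_le_one_of_one_le_of_nonpos hM1 (by linarith)
          _ = K := mul_one K
    have hterm2 : |∑ n ∈ Finset.range M, B n * (g (n+1) - g n)| ≤ K * σ * S := by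
      calc |∑ n ∈ Finset.range M, B n * (g (n+1) - g n)|
          ≤ ∑ n ∈ Finset.range M, |B n * (g (n+1) - g n)| := Finset.abs_sum_le_sum_abs _ _
        _ ≤ ∑ n ∈ Finset.range M, K * σ * (n:ℝ) ^ (α - 2) := by
            refine Finset.sum_le_sum fun n _ => ?_
            rcases Nat.eq_zero_or_pos n with h | h
            · subst h
              rw [hB0, zero_mul, abs_zero]
              exact mul_nonneg (mul_nonneg hK0 (by linarith)) (Real.rpow_nonneg (by norm_num) _)
            · have hn1 : (1:ℝ) ≤ (n:ℝ) := by exact_mod_cast h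
              rw [abs_mul]
              have hgdiff : |g (n+1) - g n| ≤ σ * (n:ℝ) ^ (-σ - 1) := by
                rw [abs_sub_comm]
                have hmono : g (n+1) ≤ g n := by
                  rw [hg]
                  push_cast
                  exact rpow_neg_anti' (by linarith) (by linarith) (by linarith)
                rw [abs_of_nonneg (by linarith)]
                have := diff_rpow_le' (by linarith : (0:ℝ) < σ) hn1
                rw [hg]
                push_cast
                linarith [this]
              calc |B n| * |g (n+1) - g n| ≤ (K * (n:ℝ) ^ α) * (σ * (n:ℝ) ^ (-σ - 1)) :=
                    mul_le_mul (hBbound n) hgdiff (abs_nonneg _)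
                      (mul_nonneg hK0 (Real.rpow_nonneg (by positivity) _))
                _ = K * σ * (n:ℝ) ^ (α + (-σ - 1)) := by
                    rw [Real.rpow_add (by positivity : (0:ℝ) < (n:ℝ))]
                    ring
                _ ≤ K * σ * (n:ℝ) ^ (α - 2) := by
                    apply mul_le_mul_of_nonneg_left _ (mul_nonneg hK0 (by linarith))
                    exact Real.rpow_le_rpow_of_exponent_le hn1 (by linarith)
        _ = K * σ * ∑ n ∈ Finset.range M, (n:ℝ) ^ (α - 2) := by rw [Finset.mul_sum]
        _ ≤ K * σ * S := mul_le_mul_of_nonneg_left (hSpartial M) (mul_nonneg hK0 (by linarith))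
    calc |B M * g M - ∑ n ∈ Finset.range M, B n * (g (n+1) - g n)|
        ≤ |B M * g M| + |∑ n ∈ Finset.range M, B n * (g (n+1) - g n)| := abs_sub _ _
      _ ≤ K + K * σ * S := add_le_add hterm1 hterm2
  -- the shifted zeta series
  have hζsum : ∀ σ : ℝ, 1 < σ → Summable (fun n : ℕ => ((n:ℝ)+1) ^ (-σ)) := by
    intro σ hσ
    have h1 : Summable (fun n : ℕ => (n:ℝ) ^ (-σ)) :=
      Real.summable_nat_rpow.mpr (by linarith)
    have := (summable_nat_add_iff 1).mpr h1
    refine this.congr fun n => ?_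
    push_cast
    ring_nf
  -- partial sums over big n
  have hP : ∀ σ : ℝ, ∀ M : ℕ, ∑ A ∈ big M, (Nrm A : ℝ) ^ (-σ)
      = ∑ n ∈ Finset.range M, (a (n+1) : ℝ) * ((n:ℝ)+1) ^ (-σ) := by
    intro σ M
    rw [hsum_big σ M, Finset.sum_range_succ']
    simp only [ha0, Nat.cast_zero, zero_mul, add_zero]
    refine Finset.sum_congr rfl fun n _ => ?_
    push_cast
    ring_nf
  -- summability
  have hsummable : ∀ σ : ℝ, 1 < σ → Summable fun A : X →₀ ℕ => (Nrm A : ℝ) ^ (-σ) := by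
    intro σ hσ
    set ζσ : ℝ := ∑' n : ℕ, ((n:ℝ)+1) ^ (-σ) with hζσ
    have hζ0 : ∀ n : ℕ, (0:ℝ) ≤ ((n:ℝ)+1) ^ (-σ) := fun n => Real.rpow_nonneg (by positivity) _
    apply summable_of_sum_le (c := K + K * σ * S + c * ζσ)
      (fun A => Real.rpow_nonneg (le_trans zero_le_one (hge' A)) _)
    intro u
    set M : ℕ := u.sup e with hM
    have hsub : u ⊆ big M := by
      intro A hA
      rw [hmem_big, hNe A]
      exact_mod_cast Nat.cast_le.mpr (Finset.le_sup (f := e) hA)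
    calc ∑ A ∈ u, (Nrm A : ℝ) ^ (-σ) ≤ ∑ A ∈ big M, (Nrm A : ℝ) ^ (-σ) :=
          Finset.sum_le_sum_of_subset_of_nonneg hsub
            (fun A _ _ => Real.rpow_nonneg (le_trans zero_le_one (hge' A)) _)
      _ = ∑ n ∈ Finset.range M, (a (n+1) : ℝ) * ((n:ℝ)+1) ^ (-σ) := hP σ M
      _ = (∑ n ∈ Finset.range M, ((a (n+1) : ℝ) - c) * ((n:ℝ)+1) ^ (-σ))
            + c * ∑ n ∈ Finset.range M, ((n:ℝ)+1) ^ (-σ) := by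
          rw [Finset.mul_sum, ← Finset.sum_add_distrib]
          refine Finset.sum_congr rfl fun n _ => ?_
          ring
      _ ≤ (K + K * σ * S) + c * ζσ := by
          refine add_le_add ((le_abs_self _).trans (key σ hσ M)) ?_
          apply mul_le_mul_of_nonneg_left _ hc.le
          exact Summable.sum_le_tsum _ (fun n _ => hζ0 n) (hζsum σ hσ)
  refine ⟨hsummable, ?_⟩
  -- tsum estimates
  have hbig_mono : Monotone big := by
    intro m n hmn A hA
    rw [hmem_big] at hA ⊢
    exact hA.trans (by exact_mod_cast hmn)
  have hbig_tendsto : Tendsto big atTop atTop := by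
    apply tendsto_atTop_finset_of_monotone hbig_mono
    intro A
    exact ⟨e A, by rw [hmem_big, hNe A]⟩
  have hZbound : ∀ σ : ℝ, 1 < σ →
      |(∑' A : X →₀ ℕ, (Nrm A : ℝ) ^ (-σ)) - c * ∑' n : ℕ, 1 / (n:ℝ) ^ σ|
        ≤ K + K * σ * S := by
    intro σ hσ
    have hζsum' : Summable (fun n : ℕ => 1 / (n:ℝ) ^ σ) :=
      Real.summable_one_div_nat_rpow.mpr hσ
    -- rewrite ζ as shifted sum
    have hζshift : ∑' n : ℕ, 1 / (n:ℝ) ^ σ = ∑' n : ℕ, ((n:ℝ)+1) ^ (-σ) := by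
      rw [Summable.tsum_eq_zero_add hζsum']
      have h0' : 1 / (0:ℝ) ^ σ = 0 := by
        rw [Real.zero_rpow (by linarith : σ ≠ 0)]; simp
      rw [Nat.cast_zero, h0', zero_add]
      refine tsum_congr fun n => ?_
      push_cast
      rw [Real.rpow_neg (by positivity), one_div]
    rw [hζshift]
    -- limits of partial sums
    have hsummσ := hsummable σ hσ
    have hTend1 : Tendsto (fun M : ℕ => ∑ A ∈ big M, (Nrm A : ℝ) ^ (-σ)) atTop
        (𝓝 (∑' A : X →₀ ℕ, (Nrm A : ℝ) ^ (-σ))) :=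
      hsummσ.hasSum.comp hbig_tendsto
    have hTend2 : Tendsto (fun M : ℕ => c * ∑ n ∈ Finset.range M, ((n:ℝ)+1) ^ (-σ)) atTop
        (𝓝 (c * ∑' n : ℕ, ((n:ℝ)+1) ^ (-σ))) :=
      ((hζsum σ hσ).hasSum.tendsto_sum_nat).const_mul c
    have hTend3 : Tendsto (fun M : ℕ =>
        |(∑ A ∈ big M, (Nrm A : ℝ) ^ (-σ)) - c * ∑ n ∈ Finset.range M, ((n:ℝ)+1) ^ (-σ)|)
        atTop (𝓝 |(∑' A : X →₀ ℕ, (Nrm A : ℝ) ^ (-σ)) - c * ∑' n : ℕ, ((n:ℝ)+1) ^ (-σ)|) :=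
      (hTend1.sub hTend2).abs
    refine le_of_tendsto hTend3 (Filter.Eventually.of_forall fun M => ?_)
    have hdiff : (∑ A ∈ big M, (Nrm A : ℝ) ^ (-σ))
        - c * ∑ n ∈ Finset.range M, ((n:ℝ)+1) ^ (-σ)
        = ∑ n ∈ Finset.range M, ((a (n+1) : ℝ) - c) * ((n:ℝ)+1) ^ (-σ) := by
      rw [hP σ M, Finset.mul_sum, ← Finset.sum_sub_distrib]
      refine Finset.sum_congr rfl fun n _ => ?_
      ring
    rw [hdiff]
    exact key σ hσ M
  -- the final limit
  have hres := tendsto_sub_mul_tsum_nat_rpow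
  have hmain : Tendsto (fun σ : ℝ =>
      c * ((σ - 1) * ∑' n : ℕ, 1 / (n:ℝ) ^ σ)
        + (σ - 1) * ((∑' A : X →₀ ℕ, (Nrm A : ℝ) ^ (-σ)) - c * ∑' n : ℕ, 1 / (n:ℝ) ^ σ))
      (𝓝[>] 1) (𝓝 (c * 1 + 0)) := by
    refine Tendsto.add (hres.const_mul c) ?_
    apply squeeze_zero_norm' (a := fun σ : ℝ => (σ - 1) * (K + K * σ * S))
    · filter_upwards [self_mem_nhdsWithin] with σ hσ
      rw [Set.mem_Ioi] at hσ
      rw [Real.norm_eq_abs, abs_mul, abs_of_nonneg (by linarith : (0:ℝ) ≤ σ - 1)]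
      exact mul_le_mul_of_nonneg_left (hZbound σ hσ) (by linarith)
    · have hcont : Tendsto (fun σ : ℝ => (σ - 1) * (K + K * σ * S)) (𝓝 1)
          (𝓝 ((1 - 1) * (K + K * 1 * S))) := by
        apply Tendsto.mul
        · exact (continuous_id.sub continuous_const).tendsto 1
        · exact (continuous_const.add ((continuous_const.mul continuous_id).mul
            continuous_const)).tendsto 1
      have : ((1:ℝ) - 1) * (K + K * 1 * S) = 0 := by ring
      rw [this] at hcont
      exact hcont.mono_left nhdsWithin_le_nhds
  rw [mul_one, add_zero] at hmain
  refine hmain.congr' ?_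
  filter_upwards [self_mem_nhdsWithin] with σ hσ
  ring
end

section
/- Suppose X is at most countable and [x] = c·x + O(x^α) for some constant c > 0 and some α ∈ [0, 1). Then for every K ∈ I_X and every complex s with Re(s) > 1, Σ_{M ∈ I_X} C_K(M)/N(M)^s = Z(s)·φ_{1−s}(K), where Z(s) = Σ_{A ∈ I_X} N(A)^{−s} and φ_w(K) = Σ_{D ∈ I_X, D ≤ K} μ(K − D)·N(D)^w. -/
open Finset Filter Topology Asymptotics
open scoped Classical

lemma isBigO_rpow_id_atTop {α : ℝ} (hα : α ≤ 1) :
    (fun x : ℝ => x ^ α) =O[atTop] fun x => x := by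
  refine IsBigO.of_bound 1 ?_
  filter_upwards [eventually_ge_atTop 1] with x hx
  rw [one_mul, Real.norm_of_nonneg (by positivity), Real.norm_of_nonneg (by linarith)]
  simpa using Real.rpow_le_rpow_of_exponent_le hx hα

lemma isBigO_id_of_sub_mul_isBigO_rpow {f : ℝ → ℝ} {c α : ℝ} (hα : α ≤ 1)
    (h : (fun x => f x - c * x) =O[atTop] fun x => x ^ α) : f =O[atTop] fun x => x := by
  simpa using (h.trans (isBigO_rpow_id_atTop hα)).add ((isBigO_refl _ _).const_mul_left c)

lemma Monotone.exists_le_mul_of_isBigO_id {f : ℝ → ℝ} (hf : Monotone f)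
    (h : f =O[atTop] fun x => x) : ∃ C, ∀ x, 1 ≤ x → f x ≤ C * x := by
  obtain ⟨C, hC⟩ := h.bound
  obtain ⟨x₀, hx₀⟩ := eventually_atTop.1 hC
  refine ⟨max C |f x₀|, fun x hx => ?_⟩
  rcases le_total x₀ x with hx₀x | hxx₀
  · calc f x ≤ ‖f x‖ := le_abs_self _
      _ ≤ C * ‖x‖ := hx₀ x hx₀x
      _ = C * x := by rw [Real.norm_of_nonneg (by linarith)]
      _ ≤ max C |f x₀| * x := by gcongr; exact le_max_left _ _
  · calc f x ≤ |f x₀| := (hf hxx₀).trans (le_abs_self _)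
      _ ≤ |f x₀| * x := le_mul_of_one_le_right (abs_nonneg _) hx
      _ ≤ max C |f x₀| * x := by gcongr; exact le_max_right _ _

lemma two_pow_log_floor_le {x : ℝ} (hx : 1 ≤ x) : (2 : ℝ) ^ Nat.log 2 ⌊x⌋₊ ≤ x :=
  calc (2 : ℝ) ^ Nat.log 2 ⌊x⌋₊ ≤ ⌊x⌋₊ := by
        exact_mod_cast Nat.pow_log_le_self 2 (Nat.floor_pos.2 hx).ne'
    _ ≤ x := Nat.floor_le (by linarith)

lemma lt_two_pow_log_floor_succ (x : ℝ) : x < (2 : ℝ) ^ (Nat.log 2 ⌊x⌋₊ + 1) :=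
  calc x < ⌊x⌋₊ + 1 := Nat.lt_floor_add_one x
    _ ≤ (2 : ℝ) ^ (Nat.log 2 ⌊x⌋₊ + 1) := by
        exact_mod_cast Nat.lt_pow_succ_log_self one_lt_two _

section Sublevel

variable {ι : Type*} {N : ι → ℝ} (hfin : ∀ x : ℝ, {i | N i ≤ x}.Finite)
include hfin

lemma monotone_card_sublevel : Monotone fun x => (#(hfin x).toFinset : ℝ) :=
  fun _ _ hxy => Nat.cast_le.2 <| card_le_card <|
    Set.Finite.toFinset_subset_toFinset.2 fun _ hi => le_trans hi hxy

lemma sum_dyadic_shell_rpow_neg_le (hN : ∀ i, 1 ≤ N i) {C : ℝ}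
    (hC : ∀ x, 1 ≤ x → (#(hfin x).toFinset : ℝ) ≤ C * x) {σ : ℝ} (hσ : 0 ≤ σ)
    (u : Finset ι) (k : ℕ) :
    ∑ i ∈ u with Nat.log 2 ⌊N i⌋₊ = k, N i ^ (-σ) ≤
      2 * C * ((2 : ℝ) ^ (1 - σ)) ^ k := by
  set shell := u.filter fun i => Nat.log 2 ⌊N i⌋₊ = k
  have hshell : shell ⊆ (hfin (2 ^ (k + 1))).toFinset := fun i hi => by
    rw [Set.Finite.mem_toFinset, Set.mem_ofPred_eq, ← (mem_filter.1 hi).2]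
    exact (lt_two_pow_log_floor_succ _).le
  calc ∑ i ∈ shell, N i ^ (-σ) ≤ ∑ _i ∈ shell, ((2 : ℝ) ^ k) ^ (-σ) := by
        refine sum_le_sum fun i hi => Real.rpow_le_rpow_of_nonpos (by positivity) ?_ (by linarith)
        rw [← (mem_filter.1 hi).2]
        exact two_pow_log_floor_le (hN i)
    _ = #shell * ((2 : ℝ) ^ k) ^ (-σ) := by rw [sum_const, nsmul_eq_mul]
    _ ≤ (C * 2 ^ (k + 1)) * ((2 : ℝ) ^ k) ^ (-σ) := by
        gcongr
        calc (#shell : ℝ) ≤ #(hfin (2 ^ (k + 1))).toFinset := by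
              exact_mod_cast card_le_card hshell
          _ ≤ C * 2 ^ (k + 1) := hC _ (one_le_pow₀ one_le_two)
    _ = 2 * C * ((2 : ℝ) ^ (1 - σ)) ^ k := by
        rw [← Real.rpow_pow_comm zero_le_two, Real.rpow_sub zero_lt_two, Real.rpow_one,
          Real.rpow_neg zero_le_two]
        field_simp
        ring

lemma summable_rpow_neg_of_card_sublevel_le (hN : ∀ i, 1 ≤ N i) {C : ℝ}
    (hC : ∀ x, 1 ≤ x → (#(hfin x).toFinset : ℝ) ≤ C * x) {σ : ℝ} (hσ : 1 < σ) :
    Summable fun i => N i ^ (-σ) := by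
  set r : ℝ := 2 ^ (1 - σ)
  have hr0 : 0 < r := by positivity
  have hr1 : r < 1 := Real.rpow_lt_one_of_one_lt_of_neg one_lt_two (by linarith)
  have hC0 : 0 ≤ C := by simpa using (Nat.cast_nonneg _).trans (hC 1 le_rfl)
  refine summable_of_sum_le (c := 2 * C * (1 - r)⁻¹)
    (fun i => Real.rpow_nonneg (zero_le_one.trans (hN i)) _) fun u => ?_
  set dyadicIndex := fun i => Nat.log 2 ⌊N i⌋₊
  have hmaps : ∀ i ∈ u, dyadicIndex i ∈ range (u.sup dyadicIndex + 1) :=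
    fun i hi => mem_range.2 (Nat.lt_succ_of_le (le_sup hi))
  rw [← sum_fiberwise_of_maps_to hmaps]
  calc _ ≤ ∑ k ∈ range (u.sup dyadicIndex + 1), 2 * C * r ^ k :=
        sum_le_sum fun k _ => sum_dyadic_shell_rpow_neg_le hfin hN hC (by linarith) u k
    _ = 2 * C * ∑ k ∈ range (u.sup dyadicIndex + 1), r ^ k := (mul_sum ..).symm
    _ ≤ 2 * C * (1 - r)⁻¹ :=
        mul_le_mul_of_nonneg_left (((summable_geometric_of_lt_one hr0.le hr1).sum_le_tsum _
          fun k _ => pow_nonneg hr0.le k).trans_eq (tsum_geometric_of_lt_one hr0.le hr1))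
          (by linarith)

end Sublevel

lemma summable_ofReal_cpow_neg {ι : Type*} {N : ι → ℝ} (hN : ∀ i, 0 < N i) {s : ℂ}
    (h : Summable fun i => N i ^ (-s.re)) : Summable fun i => (N i : ℂ) ^ (-s) :=
  Summable.of_norm <| by simpa [Complex.norm_cpow_eq_rpow_re_of_pos (hN _)] using h

lemma tsum_ite_le_ofReal_cpow_neg {α : Type*} [AddCommMonoid α] [PartialOrder α]
    [CanonicallyOrderedAdd α] [IsLeftCancelAdd α] {N : α → ℝ} (hN : ∀ a, 0 ≤ N a)
    (hmul : ∀ a b, N (a + b) = N a * N b) (s : ℂ) (d : α) :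
    ∑' m, (if d ≤ m then (N m : ℂ) ^ (-s) else 0) =
      (N d : ℂ) ^ (-s) * ∑' a, (N a : ℂ) ^ (-s) := by
  have hsupp : (Function.support fun m => if d ≤ m then (N m : ℂ) ^ (-s) else 0) ⊆
      Set.range (d + ·) := fun m hm => by
    obtain ⟨a, rfl⟩ := exists_add_of_le (of_not_not fun h => hm (if_neg h))
    exact ⟨a, rfl⟩
  rw [← (add_right_injective d).tsum_eq hsupp, ← tsum_mul_left]
  refine tsum_congr fun a => ?_
  rw [if_pos le_self_add, hmul, Complex.ofReal_mul, Complex.mul_cpow_ofReal_nonneg (hN d) (hN a)]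

lemma ram_div_cpow_eq_sum_ite {X : Type*} [DecidableEq X] (Nrm : (X →₀ ℕ) → ℤ)
    (K M : X →₀ ℕ) (s : ℂ) :
    (ram Nrm K M : ℂ) / (Nrm M : ℂ) ^ s =
      ∑ D ∈ Iic K,
        (Nrm D * mob (K - D) : ℂ) * if D ≤ M then (Nrm M : ℂ) ^ (-s) else 0 := by
  rw [ram, show Iic (M ⊓ K) = (Iic K).filter (· ≤ M) by ext; simp [and_comm], sum_filter]
  push_cast
  rw [sum_div]
  refine sum_congr rfl fun D _ => ?_
  split_ifs <;> simp [div_eq_mul_inv, Complex.cpow_neg]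

theorem tsum_ram_div_norm_cpow_general {X : Type*} [DecidableEq X]
    (Nrm : (X →₀ ℕ) → ℤ)
    (hge : ∀ A, 1 ≤ Nrm A)
    (hmul : ∀ A B, Nrm (A + B) = Nrm A * Nrm B)
    (c α : ℝ) (hα1 : α < 1)
    (hfin : ∀ x : ℝ, {A : X →₀ ℕ | (Nrm A : ℝ) ≤ x}.Finite)
    (hcount : (fun x : ℝ => (((hfin x).toFinset.card : ℝ) - c * x))
      =O[atTop] fun x : ℝ => x ^ α)
    (K : X →₀ ℕ) (s : ℂ) (hs : 1 < s.re) :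
    ∑' M : X →₀ ℕ, (ram Nrm K M : ℂ) / (Nrm M : ℂ) ^ s
      = (∑' A : X →₀ ℕ, (Nrm A : ℂ) ^ (-s))
          * ∑ D ∈ Finset.Iic K, (mob (K - D) : ℂ) * (Nrm D : ℂ) ^ (1 - s) := by
  have hpos : ∀ A, (0 : ℝ) < Nrm A := fun A => by exact_mod_cast one_pos.trans_le (hge A)
  obtain ⟨C, hC⟩ := (monotone_card_sublevel (N := fun A => (Nrm A : ℝ)) hfin)
    |>.exists_le_mul_of_isBigO_id (isBigO_id_of_sub_mul_isBigO_rpow hα1.le hcount)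
  have hZ : Summable fun A => (Nrm A : ℂ) ^ (-s) := by
    simpa using summable_ofReal_cpow_neg hpos <|
      summable_rpow_neg_of_card_sublevel_le hfin (fun A => by exact_mod_cast hge A) hC hs
  set Z := ∑' A, (Nrm A : ℂ) ^ (-s)
  have hshift (D : X →₀ ℕ) :
      ∑' M, (if D ≤ M then (Nrm M : ℂ) ^ (-s) else 0) = (Nrm D : ℂ) ^ (-s) * Z := by
    simpa using tsum_ite_le_ofReal_cpow_neg (N := fun A => (Nrm A : ℝ)) (fun A => (hpos A).le)
      (fun A B => by simp [hmul]) s D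
  have hsummand (D : X →₀ ℕ) :
      Summable fun M => if D ≤ M then (Nrm M : ℂ) ^ (-s) else 0 :=
    hZ.norm.of_norm_bounded fun M => by split_ifs <;> simp
  calc ∑' M, (ram Nrm K M : ℂ) / (Nrm M : ℂ) ^ s
      = ∑ D ∈ Iic K, (Nrm D * mob (K - D) : ℂ) * ((Nrm D : ℂ) ^ (-s) * Z) := by
        simp_rw [ram_div_cpow_eq_sum_ite, ← hshift, ← tsum_mul_left]
        exact Summable.tsum_finsetSum fun D _ => (hsummand D).mul_left _
    _ = Z * ∑ D ∈ Iic K, (mob (K - D) : ℂ) * (Nrm D : ℂ) ^ (1 - s) := by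
        rw [mul_sum]
        refine sum_congr rfl fun D _ => ?_
        rw [sub_eq_add_neg, Complex.cpow_add _ _ (by exact_mod_cast (hpos D).ne'),
          Complex.cpow_one]
        ring

/-- For `Re s > 1`, `∑_M C_K(M)/N(M)^s = Z(s)·φ_{1−s}(K)`, where
`Z(s) = ∑_A N(A)^{−s}` and `φ_w(K) = ∑_{D ≤ K} μ(K − D)·N(D)^w`. -/
theorem tsum_ram_div_norm_cpow {X : Type*} [Nonempty X] [Countable X] [DecidableEq X]
    (Nrm : (X →₀ ℕ) → ℤ)
    (hge : ∀ A, 1 ≤ Nrm A) (h0 : Nrm 0 = 1) (hgt : ∀ A, A ≠ 0 → 1 < Nrm A)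
    (hmul : ∀ A B, Nrm (A + B) = Nrm A * Nrm B)
    (c α : ℝ) (hc : 0 < c) (hα0 : 0 ≤ α) (hα1 : α < 1)
    (hfin : ∀ x : ℝ, {A : X →₀ ℕ | (Nrm A : ℝ) ≤ x}.Finite)
    (hcount : (fun x : ℝ => (((hfin x).toFinset.card : ℝ) - c * x))
      =O[atTop] fun x : ℝ => x ^ α)
    (K : X →₀ ℕ) (s : ℂ) (hs : 1 < s.re) :
    ∑' M : X →₀ ℕ, (ram Nrm K M : ℂ) / (Nrm M : ℂ) ^ s
      = (∑' A : X →₀ ℕ, (Nrm A : ℂ) ^ (-s))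
          * ∑ D ∈ Finset.Iic K, (mob (K - D) : ℂ) * (Nrm D : ℂ) ^ (1 - s) :=
  tsum_ram_div_norm_cpow_general Nrm hge hmul c α hα1 hfin hcount K s hs
end

section
/- Let F be a number field with ring of integers O_F. For every nonzero ideal 𝔞 of O_F, Σ_{𝔡 ∣ 𝔞} C_𝔞(𝔡) = N(𝔞) · ∏_{𝔭 ∣ 𝔞, 𝔭 prime} (1 − 2/N(𝔭)). -/
/-! Swapping the two sums turns the left side into `∑_{𝔢 ∣ 𝔞} τ(𝔞/𝔢) N(𝔢) μ(𝔞/𝔢)`, where `τ` counts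
divisors, because the `𝔡` with `𝔢 ∣ 𝔡 ∣ 𝔞` are the `𝔢𝔠` with `𝔠 ∣ 𝔞/𝔢`. Substituting `𝔣 = 𝔞/𝔢`, only
squarefree `𝔣` contribute; these are the products `∏ T` over sets `T` of primes dividing `𝔞`, for
which `τ(𝔣) μ(𝔣) = (-2)^|T|` and `N(𝔞/𝔣) = N(𝔞) / ∏_{𝔭 ∈ T} N(𝔭)`. The resulting sum over `T` is the
expansion of `N(𝔞) ∏_{𝔭 ∣ 𝔞} (1 - 2/N(𝔭))`. -/

open Finset Filter Topology Asymptotics NumberField Ideal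
open scoped Classical

/-- The Möbius function on nonzero ideals of the ring of integers:
`μ(𝔞) = (−1)^{ω(𝔞)}` if `𝔞` is squarefree and `0` otherwise, where `ω(𝔞)` is
the number of distinct prime ideal factors of `𝔞`. -/
noncomputable def muI {F : Type*} [Field F] [NumberField F] (a : Ideal (𝓞 F)) : ℤ :=
  if Squarefree a then
    (-1) ^ (UniqueFactorizationMonoid.normalizedFactors a).toFinset.card
  else 0

/-- The Ramanujan sum for ideals: `C_𝔞(𝔟) = ∑_{𝔡 ∣ 𝔞, 𝔡 ∣ 𝔟} N(𝔡)·μ(𝔞/𝔡)`. -/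
noncomputable def ramI {F : Type*} [Field F] [NumberField F]
    (a b : Ideal (𝓞 F)) : ℤ :=
  ∑ᶠ d ∈ {d : Ideal (𝓞 F) | d ∣ a ∧ d ∣ b}, (absNorm d : ℤ) * muI (a / d)

open UniqueFactorizationMonoid

namespace UniqueFactorizationMonoid

variable {M : Type*} [CommMonoidWithZero M] [UniqueFactorizationMonoid M]

section Divisors

variable [Finite Mˣ]

theorem finite_setOf_dvd {a : M} (ha : a ≠ 0) : {d | d ∣ a}.Finite :=
  have := Fintype.ofFinite Mˣ
  Set.finite_coe_iff.mp (@Finite.of_fintype _ (fintypeSubtypeDvd a ha))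

noncomputable def divisors (a : M) : Finset M :=
  if ha : a = 0 then ∅ else (finite_setOf_dvd ha).toFinset

theorem mem_divisors {a d : M} (ha : a ≠ 0) : d ∈ divisors a ↔ d ∣ a := by
  rw [divisors, dif_neg ha, Set.Finite.mem_toFinset, Set.mem_ofPred_eq]

theorem coe_divisors {a : M} (ha : a ≠ 0) : (divisors a : Set M) = {d | d ∣ a} :=
  Set.ext fun _ ↦ mem_divisors ha

theorem filter_dvd_divisors_mul {e c : M} (he : e ≠ 0) (hc : c ≠ 0) :
    (divisors (e * c)).filter (e ∣ ·) = (divisors c).image (e * ·) := by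
  ext d
  simp only [mem_filter, mem_image, mem_divisors (mul_ne_zero he hc), mem_divisors hc]
  constructor
  · rintro ⟨hd, c', rfl⟩
    exact ⟨c', (mul_dvd_mul_iff_left he).mp hd, rfl⟩
  · rintro ⟨c', hc', rfl⟩
    exact ⟨mul_dvd_mul_left e hc', dvd_mul_right e c'⟩

theorem card_filter_dvd_divisors_mul {e c : M} (he : e ≠ 0) (hc : c ≠ 0) :
    #((divisors (e * c)).filter (e ∣ ·)) = #(divisors c) := by
  rw [filter_dvd_divisors_mul he hc, card_image_of_injective _ (mul_right_injective₀ he)]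

end Divisors

section SquarefreeDivisors

variable [NormalizationMonoid M]

theorem prime_of_mem_primeFactors {a p : M} (hp : p ∈ primeFactors a) : Prime p :=
  prime_of_normalized_factor p (mem_primeFactors.mp hp)

theorem finset_prod_dvd_of_subset_primeFactors {a : M} {T : Finset M} (hT : T ⊆ primeFactors a) :
    ∏ p ∈ T, p ∣ a :=
  (prod_dvd_prod_of_subset _ _ id hT).trans radical_dvd_self

variable [Subsingleton Mˣ]

theorem normalizedFactors_finset_prod {T : Finset M} (hT : ∀ p ∈ T, Prime p) :
    normalizedFactors (∏ p ∈ T, p) = T.val := by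
  rw [show ∏ p ∈ T, p = T.val.prod from (prod_val T).symm, normalizedFactors_prod_of_prime hT]

theorem primeFactors_finset_prod {T : Finset M} (hT : ∀ p ∈ T, Prime p) :
    primeFactors (∏ p ∈ T, p) = T := by
  rw [primeFactors, normalizedFactors_finset_prod hT, val_toFinset]

theorem squarefree_finset_prod [Nontrivial M] {T : Finset M} (hT : ∀ p ∈ T, Prime p) :
    Squarefree (∏ p ∈ T, p) := by
  rw [squarefree_iff_nodup_normalizedFactors (prod_ne_zero_iff.mpr fun p hp ↦ (hT p hp).ne_zero),
    normalizedFactors_finset_prod hT]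
  exact T.nodup

theorem finset_prod_injOn :
    Set.InjOn (fun T : Finset M ↦ ∏ p ∈ T, p) {T | ∀ p ∈ T, Prime p} := fun T₁ h₁ T₂ h₂ h ↦ by
  simpa [primeFactors_finset_prod h₁, primeFactors_finset_prod h₂] using congrArg primeFactors h

theorem finset_prod_primeFactors [Nontrivial M] {e : M} (he : Squarefree e) :
    ∏ p ∈ primeFactors e, p = e :=
  associated_iff_eq.mp (radical_associated he.isRadical he.ne_zero)

theorem filter_squarefree_divisors [Nontrivial M] [Finite Mˣ] {a : M} (ha : a ≠ 0) :
    (divisors a).filter Squarefree = (primeFactors a).powerset.image (∏ p ∈ ·, p) := by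
  ext e
  simp only [mem_filter, mem_image, mem_powerset, mem_divisors ha]
  constructor
  · rintro ⟨hea, he⟩
    refine ⟨primeFactors e, ?_, finset_prod_primeFactors he⟩
    exact fun p hp ↦ mem_primeFactors.mpr <| Multiset.subset_of_le
      ((dvd_iff_normalizedFactors_le_normalizedFactors he.ne_zero ha).mp hea)
      (mem_primeFactors.mp hp)
  · rintro ⟨T, hT, rfl⟩
    exact ⟨finset_prod_dvd_of_subset_primeFactors hT,
      squarefree_finset_prod fun p hp ↦ prime_of_mem_primeFactors (hT hp)⟩

theorem sum_filter_squarefree_divisors [Nontrivial M] [Finite Mˣ] {β : Type*} [AddCommMonoid β]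
    {a : M} (ha : a ≠ 0) (f : M → β) :
    ∑ e ∈ divisors a with Squarefree e, f e = ∑ T ∈ (primeFactors a).powerset, f (∏ p ∈ T, p) := by
  rw [filter_squarefree_divisors ha, sum_image (finset_prod_injOn.mono fun T hT p hp ↦ ?_)]
  exact prime_of_mem_primeFactors (mem_powerset.mp hT hp)

theorem card_divisors_finset_prod [Nontrivial M] [Finite Mˣ] {T : Finset M}
    (hT : ∀ p ∈ T, Prime p) : #(divisors (∏ p ∈ T, p)) = 2 ^ #T := by
  have hsq := squarefree_finset_prod hT
  rw [← filter_true_of_mem fun e he ↦ hsq.squarefree_of_dvd ((mem_divisors hsq.ne_zero).mp he),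
    filter_squarefree_divisors hsq.ne_zero, primeFactors_finset_prod hT, card_image_of_injOn,
    card_powerset]
  exact finset_prod_injOn.mono fun T' hT' p hp ↦ hT p (mem_powerset.mp hT' hp)

end SquarefreeDivisors

end UniqueFactorizationMonoid

namespace Ideal

section DedekindDomain

variable {R : Type*} [CommRing R] [IsDedekindDomain R]

-- `/` on ideals is the colon ideal; in a Dedekind domain it is exact division.
theorem mul_div_cancel_left₀ {d : Ideal R} (hd : d ≠ ⊥) (c : Ideal R) : d * c / d = c :=
  eq_of_forall_le_iff fun I ↦ by
    rw [Submodule.le_div_iff_mul_le, ← dvd_iff_le, ← dvd_iff_le, mul_comm I,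
      mul_dvd_mul_iff_left hd]

theorem mul_div_cancel_of_dvd {a d : Ideal R} (hd : d ≠ ⊥) (h : d ∣ a) : d * (a / d) = a := by
  obtain ⟨c, rfl⟩ := h
  rw [mul_div_cancel_left₀ hd]

theorem div_div_cancel_of_dvd {a d : Ideal R} (ha : a ≠ ⊥) (h : d ∣ a) : a / (a / d) = d := by
  obtain ⟨c, rfl⟩ := h
  rw [mul_div_cancel_left₀ (left_ne_zero_of_mul ha), mul_comm,
    mul_div_cancel_left₀ (right_ne_zero_of_mul ha)]

theorem div_dvd_self {a d : Ideal R} (ha : a ≠ ⊥) (h : d ∣ a) : a / d ∣ a :=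
  Dvd.intro_left d (mul_div_cancel_of_dvd (ne_zero_of_dvd_ne_zero ha h) h)

theorem sum_divisors_div {β : Type*} [AddCommMonoid β] {a : Ideal R} (ha : a ≠ ⊥)
    (f : Ideal R → β) : ∑ e ∈ divisors a, f (a / e) = ∑ e ∈ divisors a, f e := by
  have hmaps : Set.MapsTo (a / ·) (divisors a) (divisors a) := fun e he ↦
    (mem_divisors ha).mpr (div_dvd_self ha ((mem_divisors ha).mp he))
  have hinv : Set.LeftInvOn (a / ·) (a / ·) (divisors a) := fun e he ↦
    div_div_cancel_of_dvd ha ((mem_divisors ha).mp he)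
  exact sum_nbij' _ _ hmaps hmaps hinv hinv fun _ _ ↦ rfl

theorem card_filter_dvd_divisors {a e : Ideal R} (ha : a ≠ ⊥) (hea : e ∣ a) :
    #{d ∈ divisors a | e ∣ d} = #(divisors (a / e)) := by
  have he : e ≠ ⊥ := ne_zero_of_dvd_ne_zero ha hea
  have hae : a / e ≠ ⊥ := ne_zero_of_dvd_ne_zero ha (div_dvd_self ha hea)
  conv_lhs => rw [← mul_div_cancel_of_dvd he hea]
  exact card_filter_dvd_divisors_mul he hae

theorem coe_primeFactors {a : Ideal R} (ha : a ≠ ⊥) :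
    (primeFactors a : Set (Ideal R)) = {p | p.IsPrime ∧ p ∣ a} := by
  ext p
  simp only [mem_coe, mem_primeFactors, mem_normalizedFactors_iff ha, dvd_iff_le, Set.mem_ofPred_eq]

end DedekindDomain

theorem absNorm_div_of_dvd {S : Type*} [CommRing S] [IsDedekindDomain S] [Module.Free ℤ S]
    [Module.Finite ℤ S] {K : Type*} [Field K] [CharZero K] {a d : Ideal S} (ha : a ≠ ⊥)
    (h : d ∣ a) : (absNorm (a / d) : K) = absNorm a / absNorm d := by
  have hd : d ≠ ⊥ := ne_zero_of_dvd_ne_zero ha h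
  rw [eq_div_iff (Nat.cast_ne_zero.mpr (absNorm_eq_zero_iff.not.mpr hd)), ← Nat.cast_mul,
    ← map_mul, mul_comm, mul_div_cancel_of_dvd hd h]

end Ideal

section NumberField

variable {F : Type*} [Field F] [NumberField F]

theorem muI_finset_prod {T : Finset (Ideal (𝓞 F))} (hT : ∀ p ∈ T, Prime p) :
    muI (∏ p ∈ T, p) = (-1) ^ #T := by
  rw [muI, if_pos (squarefree_finset_prod hT), toFinset_normalizedFactors,
    primeFactors_finset_prod hT]

theorem ramI_eq_sum_filter_divisors {a : Ideal (𝓞 F)} (ha : a ≠ ⊥) (b : Ideal (𝓞 F)) :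
    ramI a b = ∑ e ∈ divisors a with e ∣ b, (absNorm e : ℤ) * muI (a / e) := by
  rw [ramI, ← finsum_mem_coe_finset, coe_filter]
  simp only [mem_divisors ha]

theorem sum_ramI_eq_sum_card_divisors {a : Ideal (𝓞 F)} (ha : a ≠ ⊥) :
    ∑ d ∈ divisors a, ramI a d
      = ∑ f ∈ divisors a, (#(divisors f) : ℤ) * (absNorm (a / f) * muI f) := by
  calc ∑ d ∈ divisors a, ramI a d
      = ∑ e ∈ divisors a, (#{d ∈ divisors a | e ∣ d} : ℤ) * (absNorm e * muI (a / e)) := by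
        simp_rw [ramI_eq_sum_filter_divisors ha, sum_filter]
        rw [sum_comm]
        refine sum_congr rfl fun e _ ↦ ?_
        rw [← sum_filter, sum_const, nsmul_eq_mul]
    _ = ∑ e ∈ divisors a, (#(divisors (a / e)) : ℤ) * (absNorm e * muI (a / e)) := by
        refine sum_congr rfl fun e he ↦ ?_
        rw [card_filter_dvd_divisors ha ((mem_divisors ha).mp he)]
    _ = _ := by
        rw [← sum_divisors_div ha]
        refine sum_congr rfl fun e he ↦ ?_
        rw [div_div_cancel_of_dvd ha ((mem_divisors ha).mp he)]

theorem sum_ramI_eq_sum_powerset {a : Ideal (𝓞 F)} (ha : a ≠ ⊥) :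
    ∑ d ∈ divisors a, ramI a d
      = ∑ T ∈ (primeFactors a).powerset, (-2) ^ #T * (absNorm (a / ∏ p ∈ T, p) : ℤ) := by
  rw [sum_ramI_eq_sum_card_divisors ha, ← sum_filter_of_ne (p := Squarefree) fun e _ h ↦ ?_,
    sum_filter_squarefree_divisors ha]
  · refine sum_congr rfl fun T hT ↦ ?_
    have hTp : ∀ p ∈ T, Prime p := fun p hp ↦ prime_of_mem_primeFactors (mem_powerset.mp hT hp)
    rw [card_divisors_finset_prod hTp, muI_finset_prod hTp, neg_pow (2 : ℤ)]
    push_cast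
    ring
  · by_contra hsq
    exact h (by rw [muI, if_neg hsq, mul_zero, mul_zero])

end NumberField

/-- For every nonzero ideal `𝔞` of `O_F`:
`∑_{𝔡 ∣ 𝔞} C_𝔞(𝔡) = N(𝔞) · ∏_{𝔭 ∣ 𝔞 prime} (1 − 2/N(𝔭))`. -/
theorem sum_ramI_eq_norm_mul_prod {F : Type*} [Field F] [NumberField F]
    (a : Ideal (𝓞 F)) (ha : a ≠ ⊥) :
    ((∑ᶠ d ∈ {d : Ideal (𝓞 F) | d ∣ a}, ramI a d : ℤ) : ℝ)
      = (absNorm a : ℝ)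
          * ∏ᶠ p ∈ {p : Ideal (𝓞 F) | p.IsPrime ∧ p ∣ a},
              (1 - 2 / (absNorm p : ℝ)) := by
  rw [← coe_divisors ha, finsum_mem_coe_finset, sum_ramI_eq_sum_powerset ha,
    ← coe_primeFactors ha, finprod_mem_coe_finset]
  simp_rw [sub_eq_add_neg, ← neg_div, prod_one_add, mul_sum]
  push_cast
  refine sum_congr rfl fun T hT ↦ ?_
  rw [absNorm_div_of_dvd ha (finset_prod_dvd_of_subset_primeFactors (mem_powerset.mp hT)),
    map_prod, Nat.cast_prod, prod_div_distrib, prod_const]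
  ring
end
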